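/- arXiv:2207.11905 — 10 statements merged into one kernel-verified Lean document; each statement's English description precedes it below -/
import Mathlib

section
/- Let h : ℝⁿ → ℝ ∪ {+∞} be a proper convex function whose domain H := {x : h(x) < +∞} is compact, and suppose h is M_h-Lipschitz continuous on H. Then for every δ ≥ 0, every z ∈ H, every ξ ∈ ∂_δ h(z), and every u ∈ H, one has ‖ξ‖·dist(u, ∂H) ≤ (dist(u, ∂H) + ‖z − u‖)·M_h + ⟨ξ, z − u⟩ + δ, where ∂H denotes the topological boundary (frontier) of H and dist denotes the Euclidean distance to a set. -/
open scoped RealInnerProductSpace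
open Metric Set Filter Topology


/-- Segment from a point of a closed set to a point outside meets the frontier
at distance at most the distance between the endpoints. -/
lemma seg_frontier {E : Type*} [NormedAddCommGroup E] [NormedSpace ℝ E]
    {H : Set E} (hcl : IsClosed H) {u v : E} (hu : u ∈ H) (hv : v ∉ H) :
    ∃ y ∈ frontier H, dist u y ≤ dist u v := by
  set γ : ℝ → E := fun t => u + t • (v - u) with hγdef
  have hγ : Continuous γ := by continuity
  set T : Set ℝ := Set.Icc (0:ℝ) 1 ∩ γ ⁻¹' H with hT
  have hTcl : IsClosed T := isClosed_Icc.inter (hcl.preimage hγ)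
  have hTne : T.Nonempty := ⟨0, by simp [hT, hγdef], by simp [hT, hγdef, hu]⟩
  have hTbdd : BddAbove T := BddAbove.mono (Set.inter_subset_left) bddAbove_Icc
  set t₀ := sSup T with ht₀def
  have ht₀T : t₀ ∈ T := hTcl.csSup_mem hTne hTbdd
  have ht₀Icc : t₀ ∈ Set.Icc (0:ℝ) 1 := ht₀T.1
  have hyH : γ t₀ ∈ H := ht₀T.2
  have ht₀1 : t₀ < 1 := by
    rcases lt_or_eq_of_le ht₀Icc.2 with h1 | h1
    · exact h1
    · exfalso; apply hv; have := hyH; rw [h1] at this; simpa [hγdef] using this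
  have hclosC : γ t₀ ∈ closure Hᶜ := by
    refine mem_closure_of_tendsto (x := γ t₀) (f := γ) (b := 𝓝[>] t₀)
      ((hγ.tendsto t₀).mono_left nhdsWithin_le_nhds) ?_
    have hmem : Set.Ioo t₀ 1 ∈ 𝓝[>] t₀ := Ioo_mem_nhdsGT_of_mem ⟨le_refl _, ht₀1⟩
    filter_upwards [hmem] with t ht
    intro hγt
    have htT : t ∈ T := ⟨⟨le_trans ht₀Icc.1 ht.1.le, ht.2.le⟩, hγt⟩
    exact absurd (le_csSup hTbdd htT) (not_le.mpr ht.1)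
  refine ⟨γ t₀, ?_, ?_⟩
  · rw [frontier_eq_closure_inter_closure]
    exact ⟨subset_closure hyH, hclosC⟩
  · have : dist u (γ t₀) = t₀ * ‖v - u‖ := by
      simp only [hγdef, dist_eq_norm]
      rw [show u - (u + t₀ • (v - u)) = -(t₀ • (v - u)) by abel, norm_neg, norm_smul,
        Real.norm_eq_abs, abs_of_nonneg ht₀Icc.1]
    rw [this, dist_eq_norm, norm_sub_rev u v]
    calc t₀ * ‖v - u‖ ≤ 1 * ‖v - u‖ := by
          exact mul_le_mul_of_nonneg_right ht₀Icc.2 (norm_nonneg _)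
      _ = ‖v - u‖ := one_mul _

lemma ball_subset_of_infDist_frontier {E : Type*} [NormedAddCommGroup E] [NormedSpace ℝ E]
    {H : Set E} (hcl : IsClosed H) {u : E} (hu : u ∈ H) {w : E}
    (hw : dist u w ≤ Metric.infDist u (frontier H)) : w ∈ H := by
  by_contra hwH
  set d := dist u w with hd
  have hd0 : 0 < d := dist_pos.mpr (fun e => hwH (e ▸ hu))
  have hr0 : 0 < Metric.infDist u (frontier H) := lt_of_lt_of_le hd0 hw
  obtain ⟨ε, hε, hball⟩ := Metric.isOpen_iff.mp hcl.isOpen_compl w hwH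
  set t : ℝ := max (1/2) (1 - ε / (2 * d)) with htdef
  have ht0 : 0 ≤ t := le_trans (by norm_num) (le_max_left _ _)
  have ht1 : t < 1 := by
    apply max_lt (by norm_num)
    have : 0 < ε / (2 * d) := by positivity
    linarith
  have h1t : (1 - t) * d < ε := by
    have h1 : 1 - t ≤ ε / (2 * d) := by
      have := le_max_right (1/2) (1 - ε / (2 * d)); linarith [this]
    calc (1 - t) * d ≤ (ε / (2 * d)) * d := mul_le_mul_of_nonneg_right h1 hd0.le
      _ = ε / 2 := by field_simp
      _ < ε := by linarith
  set w' := u + t • (w - u) with hw'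
  have hw'C : w' ∉ H := by
    apply hball
    have : dist w' w = (1 - t) * d := by
      rw [hw', dist_eq_norm, hd, dist_eq_norm, norm_sub_rev u w]
      rw [show u + t • (w - u) - w = -((1 - t) • (w - u)) by
        rw [sub_smul, one_smul]; abel, norm_neg, norm_smul, Real.norm_eq_abs,
        abs_of_nonneg (by linarith)]
    rw [Metric.mem_ball, this]; exact h1t
  obtain ⟨y, hyf, hyd⟩ := seg_frontier hcl hu hw'C
  have hduw' : dist u w' = t * d := by
    rw [hw', dist_eq_norm, hd, dist_eq_norm, norm_sub_rev u w]
    rw [show u - (u + t • (w - u)) = -(t • (w - u)) by abel, norm_neg, norm_smul,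
      Real.norm_eq_abs, abs_of_nonneg ht0]
  have h1 : Metric.infDist u (frontier H) ≤ dist u y := Metric.infDist_le_dist_of_mem hyf
  have h2 : t * d < Metric.infDist u (frontier H) := by
    calc t * d ≤ t * Metric.infDist u (frontier H) :=
          mul_le_mul_of_nonneg_left hw ht0
      _ < 1 * Metric.infDist u (frontier H) := by
          exact mul_lt_mul_of_pos_right ht1 hr0
      _ = _ := one_mul _
  rw [hduw'] at hyd
  linarith


/-- Let `h : ℝⁿ → ℝ ∪ {+∞}` (modeled as an `EReal`-valued function that
never takes the value `⊥`) be a proper convex function whose domain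
`H := {x | h x < ⊤}` is compact, and suppose `h` is `M`-Lipschitz continuous on `H`.
Then for every `δ ≥ 0`, `z ∈ H`, `ξ ∈ ∂_δ h(z)`, and `u ∈ H`:
`‖ξ‖ · dist(u, ∂H) ≤ (dist(u, ∂H) + ‖z − u‖)·M + ⟪ξ, z − u⟫ + δ`. -/
theorem stmt1 {n : ℕ} (h : EuclideanSpace ℝ (Fin n) → EReal)
    (hbot : ∀ x, h x ≠ ⊥)
    (hconv : ∀ x y : EuclideanSpace ℝ (Fin n), ∀ a b : ℝ, 0 ≤ a → 0 ≤ b → a + b = 1 →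
      h (a • x + b • y) ≤ (a : EReal) * h x + (b : EReal) * h y)
    (H : Set (EuclideanSpace ℝ (Fin n))) (hH : H = {x | h x < ⊤})
    (hne : H.Nonempty)
    (hcompact : IsCompact H)
    (M : ℝ)
    (hlip : ∀ x ∈ H, ∀ y ∈ H, h x ≤ h y + ((M * ‖x - y‖ : ℝ) : EReal))
    (δ : ℝ) (hδ : 0 ≤ δ)
    (z : EuclideanSpace ℝ (Fin n)) (hz : z ∈ H)
    (ξ : EuclideanSpace ℝ (Fin n))
    (hξ : ∀ z', h z + ((⟪ξ, z' - z⟫ - δ : ℝ) : EReal) ≤ h z')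
    (u : EuclideanSpace ℝ (Fin n)) (hu : u ∈ H) :
    ‖ξ‖ * Metric.infDist u (frontier H) ≤
      (Metric.infDist u (frontier H) + ‖z - u‖) * M + ⟪ξ, z - u⟫ + δ := by
  classical
  set r := Metric.infDist u (frontier H) with hrdef
  have hr0 : 0 ≤ r := Metric.infDist_nonneg
  have hcl : IsClosed H := hcompact.isClosed
  have hval : ∀ x ∈ H, h x = ((h x).toReal : EReal) := by
    intro x hx
    rw [hH] at hx
    exact (EReal.coe_toReal (ne_of_lt hx) (hbot x)).symm
  by_cases hsub : H.Subsingleton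
  · have hzu : z = u := hsub hz hu
    have hr : r = 0 := by
      rcases (frontier H).eq_empty_or_nonempty with he | ⟨y, hy⟩
      · rw [hrdef, he, Metric.infDist_empty]
      · have hyH : y ∈ H := by
          have := frontier_subset_closure hy
          rwa [hcl.closure_eq] at this
        have hyu : y = u := hsub hyH hu
        refine le_antisymm ?_ hr0
        calc r ≤ dist u y := Metric.infDist_le_dist_of_mem hy
          _ = 0 := by rw [hyu, dist_self]
    rw [hzu, hr]
    simp only [sub_self, norm_zero, inner_zero_right, mul_zero, add_zero, zero_add, zero_mul]
    linarith
  · obtain ⟨a, ha, b, hb, hab⟩ : ∃ a ∈ H, ∃ b ∈ H, a ≠ b := by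
      rw [Set.not_subsingleton_iff] at hsub
      exact hsub
    have hM : 0 ≤ M := by
      have h1 := hlip a ha b hb
      have h2 := hlip b hb a ha
      rw [hval a ha, hval b hb] at h1 h2
      rw [← EReal.coe_add, EReal.coe_le_coe_iff] at h1 h2
      have hd : 0 < ‖a - b‖ := by rwa [norm_pos_iff, sub_ne_zero]
      have hba : ‖b - a‖ = ‖a - b‖ := norm_sub_rev _ _
      rw [hba] at h2
      by_contra hMneg
      push_neg at hMneg
      have := mul_neg_of_neg_of_pos hMneg hd
      linarith
    obtain ⟨w, hwH, hwinner, hwz⟩ :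
        ∃ w ∈ H, ⟪ξ, w - u⟫ = ‖ξ‖ * r ∧ ‖w - z‖ ≤ r + ‖z - u‖ := by
      by_cases hξ0 : ξ = 0
      · refine ⟨u, hu, ?_, ?_⟩
        · simp [hξ0]
        · rw [show u - z = -(z - u) by abel, norm_neg]; linarith
      · have hnξ : 0 < ‖ξ‖ := norm_pos_iff.mpr hξ0
        refine ⟨u + (r / ‖ξ‖) • ξ, ?_, ?_, ?_⟩
        · apply ball_subset_of_infDist_frontier hcl hu
          have hd : dist u (u + (r / ‖ξ‖) • ξ) = r := by
            rw [dist_eq_norm]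
            rw [show u - (u + (r / ‖ξ‖) • ξ) = -((r / ‖ξ‖) • ξ) by abel]
            rw [norm_neg, norm_smul, Real.norm_eq_abs, abs_of_nonneg (by positivity)]
            field_simp
          rw [hd]
        · rw [show u + (r / ‖ξ‖) • ξ - u = (r / ‖ξ‖) • ξ by abel]
          rw [real_inner_smul_right, real_inner_self_eq_norm_sq]
          field_simp
        · have e1 : ‖u + (r / ‖ξ‖) • ξ - z‖ ≤ ‖(r / ‖ξ‖) • ξ‖ + ‖u - z‖ := by
            rw [show u + (r / ‖ξ‖) • ξ - z = (r / ‖ξ‖) • ξ + (u - z) by abel]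
            exact norm_add_le _ _
          have e2 : ‖(r / ‖ξ‖) • ξ‖ = r := by
            rw [norm_smul, Real.norm_eq_abs, abs_of_nonneg (by positivity)]
            field_simp
          have e3 : ‖u - z‖ = ‖z - u‖ := norm_sub_rev _ _
          rw [e2, e3] at e1
          exact e1
    have h1 := hξ w
    have h2 := hlip w hwH z hz
    rw [hval w hwH, hval z hz] at h1 h2
    rw [← EReal.coe_add, EReal.coe_le_coe_iff] at h1 h2
    have hinner : ⟪ξ, w - z⟫ = ‖ξ‖ * r - ⟪ξ, z - u⟫ := by
      rw [show w - z = (w - u) + -(z - u) by abel, inner_add_right, inner_neg_right, hwinner]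
      ring
    have hMz : M * ‖w - z‖ ≤ M * (r + ‖z - u‖) := mul_le_mul_of_nonneg_left hwz hM
    rw [hinner] at h1
    linarith
end

section
/- Let h : ℝⁿ → ℝ ∪ {+∞} be a proper convex function whose domain H := {x : h(x) < +∞} is compact with diameter D_h := sup{‖z − z'‖ : z, z' ∈ H}, and suppose h is M_h-Lipschitz continuous on H. Let A : ℝⁿ → ℝˡ be a nonzero linear map, b ∈ ℝˡ, and suppose there exists z̄ in the interior of H with A z̄ = b; set d̄ := dist(z̄, ∂H). Let ν > 0 be such that ν‖q'‖ ≤ ‖A*q'‖ for every q' in the range of A. If z ∈ H, q lies in the range of A, and r ∈ ℝⁿ satisfies r − A*q ∈ ∂h(z), then d̄·ν·‖q‖ ≤ 2 D_h (M_h + ‖r‖) − ⟨q, Az − b⟩. -/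
open scoped RealInnerProductSpace

lemma aux_ball_subset {n : ℕ} (H : Set (EuclideanSpace ℝ (Fin n))) (hcompact : IsCompact H)
    (zbar : EuclideanSpace ℝ (Fin n)) (hzbar : zbar ∈ interior H) :
    Metric.closedBall zbar (Metric.infDist zbar (frontier H)) ⊆ H := by
  set d := Metric.infDist zbar (frontier H) with hd
  have hzH : zbar ∈ H := interior_subset hzbar
  by_cases huniv : H = Set.univ
  · simp [huniv]
  have hball : Metric.ball zbar d ⊆ H := by
    intro y hy
    by_contra hyH
    obtain ⟨w, hwf, hwd⟩ := exists_mem_frontier_infDist_compl_eq_dist hzH huniv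
    have h1 : Metric.infDist zbar Hᶜ ≤ dist zbar y := Metric.infDist_le_dist_of_mem hyH
    have h2 : d ≤ dist zbar w := Metric.infDist_le_dist_of_mem hwf
    rw [Metric.mem_ball, dist_comm] at hy
    linarith [hwd ▸ h1]
  rcases eq_or_lt_of_le (Metric.infDist_nonneg (x := zbar) (s := frontier H)) with h0 | h0
  · rw [← hd] at h0; rw [← h0]; simpa using hzH
  · rw [← closure_ball zbar (ne_of_gt h0)]
    exact hcompact.isClosed.closure_subset_iff.mpr hball

set_option maxHeartbeats 1000000 in

set_option maxHeartbeats 1000000 in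
/-- Let `h : ℝⁿ → ℝ ∪ {+∞}` (modeled as an `EReal`-valued function never
taking the value `⊥`) be proper convex with compact domain `H := {x | h x < ⊤}` of
diameter `D_h`, `M`-Lipschitz on `H`. Let `A` be a nonzero linear map, `b ∈ ℝˡ`,
`z̄ ∈ interior H` with `A z̄ = b`, `d̄ := dist(z̄, ∂H)`, and `ν > 0` with
`ν‖q'‖ ≤ ‖A*q'‖` for all `q'` in the range of `A`. If `z ∈ H`, `q ∈ range A` and
`r − A*q ∈ ∂h(z)`, then `d̄·ν·‖q‖ ≤ 2 D_h (M + ‖r‖) − ⟪q, Az − b⟫`. -/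
theorem stmt2 {n l : ℕ} (h : EuclideanSpace ℝ (Fin n) → EReal)
    (hbot : ∀ x, h x ≠ ⊥)
    (hconv : ∀ x y : EuclideanSpace ℝ (Fin n), ∀ a b : ℝ, 0 ≤ a → 0 ≤ b → a + b = 1 →
      h (a • x + b • y) ≤ (a : EReal) * h x + (b : EReal) * h y)
    (H : Set (EuclideanSpace ℝ (Fin n))) (hH : H = {x | h x < ⊤})
    (hne : H.Nonempty)
    (hcompact : IsCompact H)
    (M : ℝ)
    (hlip : ∀ x ∈ H, ∀ y ∈ H, h x ≤ h y + ((M * ‖x - y‖ : ℝ) : EReal))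
    (A : EuclideanSpace ℝ (Fin n) →ₗ[ℝ] EuclideanSpace ℝ (Fin l))
    (hA : A ≠ 0) (b : EuclideanSpace ℝ (Fin l))
    (zbar : EuclideanSpace ℝ (Fin n)) (hzbar : zbar ∈ interior H) (hAzbar : A zbar = b)
    (ν : ℝ) (hν : 0 < ν)
    (hνA : ∀ q' ∈ LinearMap.range A, ν * ‖q'‖ ≤ ‖LinearMap.adjoint A q'‖)
    (z : EuclideanSpace ℝ (Fin n)) (hz : z ∈ H)
    (q : EuclideanSpace ℝ (Fin l)) (hq : q ∈ LinearMap.range A)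
    (r : EuclideanSpace ℝ (Fin n))
    (hr : ∀ z', h z + ((⟪r - LinearMap.adjoint A q, z' - z⟫ : ℝ) : EReal) ≤ h z') :
    Metric.infDist zbar (frontier H) * ν * ‖q‖ ≤
      2 * Metric.diam H * (M + ‖r‖) - ⟪q, A z - b⟫ := by
  -- real value of h on H
  have hreal : ∀ x ∈ H, ((h x).toReal : EReal) = h x := by
    intro x hx
    rw [hH] at hx
    exact EReal.coe_toReal hx.ne (hbot x)
  have hlipR : ∀ x ∈ H, ∀ y ∈ H, (h x).toReal ≤ (h y).toReal + M * ‖x - y‖ := by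
    intro x hx y hy
    have := hlip x hx y hy
    rw [← hreal x hx, ← hreal y hy, ← EReal.coe_add, EReal.coe_le_coe_iff] at this
    exact this
  set d := Metric.infDist zbar (frontier H) with hd
  have hd0 : 0 ≤ d := Metric.infDist_nonneg
  set w := LinearMap.adjoint A q with hw
  set z' := zbar - (d / ‖w‖) • w with hz'def
  have hdw : d / ‖w‖ * ‖w‖ ≤ d := by
    rcases eq_or_ne w 0 with h0 | h0
    · simp [h0, hd0]
    · rw [div_mul_cancel₀ _ (norm_ne_zero_iff.mpr h0)]
  have hdw0 : 0 ≤ d / ‖w‖ := div_nonneg hd0 (norm_nonneg w)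
  have hz'H : z' ∈ H := by
    apply aux_ball_subset H hcompact zbar hzbar
    rw [Metric.mem_closedBall, dist_eq_norm]
    have : z' - zbar = -((d / ‖w‖) • w) := by rw [hz'def]; abel
    rw [this, norm_neg, norm_smul, Real.norm_eq_abs, abs_of_nonneg hdw0]
    exact hdw
  -- subgradient inequality in ℝ
  have hsub : (h z).toReal + ⟪r - w, z' - z⟫ ≤ (h z').toReal := by
    have := hr z'
    rw [← hreal z hz, ← hreal z' hz'H, ← EReal.coe_add, EReal.coe_le_coe_iff] at this
    exact this
  have hlipz : (h z').toReal ≤ (h z).toReal + M * ‖z' - z‖ := hlipR z' hz'H z hz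
  -- inner product computations
  have hip1 : ⟪w, z' - z⟫ = ⟪w, zbar - z⟫ - d / ‖w‖ * (‖w‖ * ‖w‖) := by
    have hzz : z' - z = (zbar - z) - (d / ‖w‖) • w := by rw [hz'def]; abel
    rw [hzz, inner_sub_right, real_inner_smul_right, real_inner_self_eq_norm_mul_norm]
  have hdw2 : d / ‖w‖ * (‖w‖ * ‖w‖) = d * ‖w‖ := by
    rcases eq_or_ne w 0 with h0 | h0
    · simp [h0]
    · rw [← mul_assoc, div_mul_cancel₀ _ (norm_ne_zero_iff.mpr h0)]
  have hip2 : ⟪w, zbar - z⟫ = -⟪q, A z - b⟫ := by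
    rw [hw, LinearMap.adjoint_inner_left, map_sub, hAzbar, inner_sub_right, inner_sub_right]
    ring
  have hip3 : ⟪r - w, z' - z⟫ = ⟪r, z' - z⟫ - ⟪w, z' - z⟫ := inner_sub_left _ _ _
  have hcs : -(‖r‖ * ‖z' - z‖) ≤ ⟪r, z' - z⟫ :=
    neg_le_of_abs_le (abs_real_inner_le_norm r (z' - z))
  -- bound on the (M + ‖r‖) * ‖z' - z‖ term
  have hbound : (M + ‖r‖) * ‖z' - z‖ ≤ 2 * Metric.diam H * (M + ‖r‖) := by
    by_cases hMr : 0 ≤ M + ‖r‖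
    · have h1 : ‖z' - z‖ ≤ Metric.diam H := by
        rw [← dist_eq_norm]
        exact Metric.dist_le_diam_of_mem hcompact.isBounded hz'H hz
      nlinarith [Metric.diam_nonneg (s := H)]
    · push_neg at hMr
      have hM : M < 0 := by nlinarith [norm_nonneg r]
      have hss : H.Subsingleton := by
        intro x hx y hy
        by_contra hxy
        have h1 := hlipR x hx y hy
        have h2 := hlipR y hy x hx
        have hxy' : 0 < ‖x - y‖ := norm_pos_iff.mpr (sub_ne_zero.mpr hxy)
        have : ‖y - x‖ = ‖x - y‖ := norm_sub_rev y x
        nlinarith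
      have hzz : z' = z := hss hz'H hz
      have hdiam : Metric.diam H = 0 := Metric.diam_subsingleton hss
      simp [hzz, hdiam]
  -- assemble
  have hkey : d * ‖w‖ ≤ (M + ‖r‖) * ‖z' - z‖ - ⟪q, A z - b⟫ := by
    rw [hip3, hip1, hip2, hdw2] at hsub
    nlinarith
  have hνq : ν * ‖q‖ ≤ ‖w‖ := hνA q hq
  have : d * (ν * ‖q‖) ≤ d * ‖w‖ := mul_le_mul_of_nonneg_left hνq hd0
  calc d * ν * ‖q‖ = d * (ν * ‖q‖) := by ring
    _ ≤ d * ‖w‖ := this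
    _ ≤ (M + ‖r‖) * ‖z' - z‖ - ⟪q, A z - b⟫ := hkey
    _ ≤ 2 * Metric.diam H * (M + ‖r‖) - ⟪q, A z - b⟫ := by linarith
end

section
/- Let h : ℝⁿ → ℝ ∪ {+∞} be a proper convex function whose domain H := {x : h(x) < +∞} is compact with diameter D_h := sup{‖z − z'‖ : z, z' ∈ H}, and suppose h is M_h-Lipschitz continuous on H. Let A : ℝⁿ → ℝˡ be a nonzero linear map, b ∈ ℝˡ, and suppose there exists z̄ in the interior of H with A z̄ = b; set d̄ := dist(z̄, ∂H). Let ν > 0 be such that ν‖q'‖ ≤ ‖A*q'‖ for every q' in the range of A. Suppose z ∈ H, q lies in the range of A, r − A*q ∈ ∂h(z), and in addition q = q⁻ + χ(Az − b) for some q⁻ ∈ ℝˡ and χ > 0. Then ‖q‖ ≤ max{ ‖q⁻‖, 2 D_h (M_h + ‖r‖)/(d̄ ν) }. -/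
open scoped RealInnerProductSpace


lemma seg_meets_frontier {E : Type*} [NormedAddCommGroup E] [NormedSpace ℝ E]
    {s : Set E} {x y : E} (hx : x ∈ s) (hy : y ∉ s) :
    ∃ p ∈ segment ℝ x y, p ∈ frontier s := by
  by_contra hcon
  push_neg at hcon
  have hpre := (convex_segment x y).isPreconnected
  have hxI : x ∈ interior s := by
    by_contra hxi
    exact hcon x (left_mem_segment ℝ x y) ⟨subset_closure hx, hxi⟩
  have hyI : y ∈ interior sᶜ := by
    rw [interior_compl]
    intro hc
    exact hcon y (right_mem_segment ℝ x y) ⟨hc, fun hi => hy (interior_subset hi)⟩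
  have hsub : segment ℝ x y ⊆ interior s ∪ interior sᶜ := by
    intro p hp
    by_contra hp2
    simp only [Set.mem_union, not_or] at hp2
    have hpc : p ∈ closure s := by
      have := hp2.2; rw [interior_compl] at this; simpa using this
    exact hcon p hp ⟨hpc, hp2.1⟩
  obtain ⟨p, hp⟩ := hpre (interior s) (interior sᶜ) isOpen_interior isOpen_interior hsub
    ⟨x, left_mem_segment ℝ x y, hxI⟩ ⟨y, right_mem_segment ℝ x y, hyI⟩
  exact (interior_subset hp.2.2) (interior_subset hp.2.1)

set_option maxHeartbeats 1000000 in
/-- In the setting of Statement 2, if in addition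
`q = q⁻ + χ(Az − b)` for some `q⁻ ∈ ℝˡ` and `χ > 0`, then
`‖q‖ ≤ max{‖q⁻‖, 2 D_h (M + ‖r‖)/(d̄ ν)}`. -/
theorem stmt3 {n l : ℕ} (h : EuclideanSpace ℝ (Fin n) → EReal)
    (hbot : ∀ x, h x ≠ ⊥)
    (hconv : ∀ x y : EuclideanSpace ℝ (Fin n), ∀ a b : ℝ, 0 ≤ a → 0 ≤ b → a + b = 1 →
      h (a • x + b • y) ≤ (a : EReal) * h x + (b : EReal) * h y)
    (H : Set (EuclideanSpace ℝ (Fin n))) (hH : H = {x | h x < ⊤})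
    (hne : H.Nonempty)
    (hcompact : IsCompact H)
    (M : ℝ)
    (hlip : ∀ x ∈ H, ∀ y ∈ H, h x ≤ h y + ((M * ‖x - y‖ : ℝ) : EReal))
    (A : EuclideanSpace ℝ (Fin n) →ₗ[ℝ] EuclideanSpace ℝ (Fin l))
    (hA : A ≠ 0) (b : EuclideanSpace ℝ (Fin l))
    (zbar : EuclideanSpace ℝ (Fin n)) (hzbar : zbar ∈ interior H) (hAzbar : A zbar = b)
    (ν : ℝ) (hν : 0 < ν)
    (hνA : ∀ q' ∈ LinearMap.range A, ν * ‖q'‖ ≤ ‖LinearMap.adjoint A q'‖)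
    (z : EuclideanSpace ℝ (Fin n)) (hz : z ∈ H)
    (q : EuclideanSpace ℝ (Fin l)) (hq : q ∈ LinearMap.range A)
    (r : EuclideanSpace ℝ (Fin n))
    (hr : ∀ z', h z + ((⟪r - LinearMap.adjoint A q, z' - z⟫ : ℝ) : EReal) ≤ h z')
    (qminus : EuclideanSpace ℝ (Fin l)) (χ : ℝ) (hχ : 0 < χ)
    (hqform : q = qminus + χ • (A z - b)) :
    ‖q‖ ≤ max ‖qminus‖
      (2 * Metric.diam H * (M + ‖r‖) / (Metric.infDist zbar (frontier H) * ν)) := by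
  classical
  -- dispose of the degenerate case n = 0
  rcases Nat.eq_zero_or_pos n with hn0 | hn
  · exfalso
    apply hA
    subst hn0
    exact LinearMap.ext fun x => by
      rw [Subsingleton.elim x (0 : EuclideanSpace ℝ (Fin 0)), map_zero, LinearMap.zero_apply]
  haveI : Nonempty (Fin n) := ⟨⟨0, hn⟩⟩
  haveI : Nontrivial (EuclideanSpace ℝ (Fin n)) := by
    refine ⟨⟨0, EuclideanSpace.single ⟨0, hn⟩ 1, fun hc => ?_⟩⟩
    have := congrArg (fun v : EuclideanSpace ℝ (Fin n) => v ⟨0, hn⟩) hc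
    simp [EuclideanSpace.single_apply] at this
  set d := Metric.infDist zbar (frontier H) with hd_def
  -- H ≠ univ
  have hHne_univ : H ≠ Set.univ := by
    intro hu
    rw [hu] at hcompact
    exact noncompact_univ _ hcompact
  have hfr_ne : (frontier H).Nonempty := nonempty_frontier_iff.mpr ⟨hne, hHne_univ⟩
  have hzbar_not_fr : zbar ∉ frontier H := fun hf => hf.2 hzbar
  have hd_pos : 0 < d := (isClosed_frontier.notMem_iff_infDist_pos hfr_ne).1 hzbar_not_fr
  have hzbarH : zbar ∈ H := interior_subset hzbar
  -- points strictly within distance d of zbar are in H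
  have hball : ∀ y : EuclideanSpace ℝ (Fin n), dist zbar y < d → y ∈ H := by
    intro y hy
    by_contra hyH
    obtain ⟨p, hp_seg, hp_fr⟩ := seg_meets_frontier hzbarH hyH
    have h1 : d ≤ dist zbar p := Metric.infDist_le_dist_of_mem hp_fr
    obtain ⟨a, c, ha, hc, hac, rfl⟩ := hp_seg
    have hpd : dist zbar (a • zbar + c • y) ≤ dist zbar y := by
      rw [dist_eq_norm, dist_eq_norm]
      have : zbar - (a • zbar + c • y) = c • (zbar - y) := by
        have hac' : a = 1 - c := by linarith
        rw [hac']; module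
      rw [this, norm_smul, Real.norm_eq_abs, abs_of_nonneg hc]
      nlinarith [norm_nonneg (zbar - y)]
    linarith
  have hDnn : (0:ℝ) ≤ Metric.diam H := Metric.diam_nonneg
  -- real values of h on H
  have hreal : ∀ x ∈ H, h x = ((h x).toReal : EReal) := by
    intro x hx
    rw [hH] at hx
    exact (EReal.coe_toReal (ne_of_lt hx) (hbot x)).symm
  -- first trivial case : ‖q‖ ≤ ‖qminus‖
  rcases le_or_gt ‖q‖ ‖qminus‖ with hle | hgt
  · exact le_max_of_le_left hle
  -- second degenerate case : q = 0
  rcases eq_or_ne q 0 with rfl | hq0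
  · exact le_max_of_le_left (by simpa using norm_nonneg qminus)
  set w := LinearMap.adjoint A q with hw_def
  have hw0 : w ≠ 0 := by
    intro hw
    have := hνA q hq
    rw [← hw_def, hw, norm_zero] at this
    have hqpos : 0 < ‖q‖ := norm_pos_iff.mpr hq0
    nlinarith
  have hwpos : 0 < ‖w‖ := norm_pos_iff.mpr hw0
  -- the inner product ⟪q, Az - b⟫ is nonnegative
  have hinner : 0 ≤ ⟪q, A z - b⟫ := by
    have hform : A z - b = χ⁻¹ • (q - qminus) := by
      have : χ • (A z - b) = q - qminus := by rw [hqform]; abel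
      rw [← this, smul_smul, inv_mul_cancel₀ (ne_of_gt hχ), one_smul]
    rw [hform, real_inner_smul_right, inner_sub_right, real_inner_self_eq_norm_sq]
    have h2 : ⟪q, qminus⟫ ≤ ‖q‖ * ‖qminus‖ := real_inner_le_norm q qminus
    have h3 : (0:ℝ) < χ⁻¹ := inv_pos.mpr hχ
    have h4 : (0:ℝ) ≤ ‖q‖ ^ 2 - ⟪q, qminus⟫ := by
      nlinarith [mul_le_mul_of_nonneg_left hgt.le (norm_nonneg q)]
    exact mul_nonneg h3.le h4
  -- the test point z'
  set t : ℝ := d / 2 with ht_def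
  have ht_pos : 0 < t := by positivity
  set z' : EuclideanSpace ℝ (Fin n) := zbar - (t * ‖w‖⁻¹) • w with hz'_def
  have hdist : dist zbar z' = t := by
    rw [dist_eq_norm, hz'_def]
    have : zbar - (zbar - (t * ‖w‖⁻¹) • w) = (t * ‖w‖⁻¹) • w := by abel
    rw [this, norm_smul, Real.norm_eq_abs, abs_of_nonneg (by positivity), mul_assoc,
      inv_mul_cancel₀ (ne_of_gt hwpos), mul_one]
  have hz'H : z' ∈ H := hball z' (by rw [hdist]; rw [ht_def]; linarith)
  -- M is nonnegative
  have hzz' : zbar ≠ z' := by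
    intro hc
    have : dist zbar z' = 0 := by rw [hc, dist_self]
    rw [hdist] at this; linarith
  have hM : 0 ≤ M := by
    have h1 := hlip zbar hzbarH z' hz'H
    have h2 := hlip z' hz'H zbar hzbarH
    rw [hreal zbar hzbarH, hreal z' hz'H] at h1 h2
    rw [← EReal.coe_add, EReal.coe_le_coe_iff] at h1 h2
    have hnz : 0 < ‖zbar - z'‖ := by
      rw [← dist_eq_norm, hdist]; exact ht_pos
    have hsym : ‖z' - zbar‖ = ‖zbar - z'‖ := norm_sub_rev _ _
    nlinarith
  -- extract the real subgradient inequality at z'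
  have hsub := hr z'
  rw [hreal z hz, hreal z' hz'H, ← EReal.coe_add, EReal.coe_le_coe_iff] at hsub
  -- extract Lipschitz between z' and z
  have hlz := hlip z' hz'H z hz
  rw [hreal z' hz'H, hreal z hz, ← EReal.coe_add, EReal.coe_le_coe_iff] at hlz
  -- compute the inner product ⟪w, z' - z⟫
  have hinner2 : ⟪w, z' - z⟫ = -⟪q, A z - b⟫ - t * ‖w‖ := by
    have hAz' : A (z' - z) = (b - A z) - (t * ‖w‖⁻¹) • A w := by
      rw [hz'_def]
      simp only [map_sub, map_smul, hAzbar]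
      abel
    rw [hw_def, LinearMap.adjoint_inner_left, hAz']
    have hqAw : ⟪q, A w⟫ = ‖w‖ ^ 2 := by
      rw [← LinearMap.adjoint_inner_left, ← hw_def, real_inner_self_eq_norm_sq]
    simp only [inner_sub_right, real_inner_smul_right, hqAw]
    have h5 : t * ‖w‖⁻¹ * ‖w‖ ^ 2 = t * ‖w‖ := by
      rw [sq, ← mul_assoc, mul_assoc t, inv_mul_cancel₀ (ne_of_gt hwpos), mul_one]
    rw [h5]
    ring
  -- put it together
  have hinnersplit : ⟪r - w, z' - z⟫ = ⟪r, z' - z⟫ - ⟪w, z' - z⟫ := inner_sub_left r w _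
  have hrbound : -(‖r‖ * ‖z' - z‖) ≤ ⟪r, z' - z⟫ := by
    have := abs_real_inner_le_norm r (z' - z)
    cases abs_le.mp this with
    | intro h1 h2 => linarith
  have hDz : ‖z' - z‖ ≤ Metric.diam H := by
    rw [← dist_eq_norm]
    exact Metric.dist_le_diam_of_mem hcompact.isBounded hz'H hz
  -- chain of inequalities
  have hkey : t * ‖w‖ ≤ (M + ‖r‖) * Metric.diam H := by
    have e1 : ⟪r - w, z' - z⟫ ≤ M * ‖z' - z‖ := by linarith
    have e2 : ⟪q, A z - b⟫ + t * ‖w‖ ≤ (M + ‖r‖) * ‖z' - z‖ := by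
      rw [hinnersplit, hinner2] at e1
      nlinarith
    have hMr : 0 ≤ M + ‖r‖ := by positivity
    nlinarith [norm_nonneg (z' - z)]
  have hνq : ν * ‖q‖ ≤ ‖w‖ := hνA q hq
  have hfinal : ‖q‖ ≤ 2 * Metric.diam H * (M + ‖r‖) / (d * ν) := by
    rw [le_div_iff₀ (by positivity)]
    have ht2 : t * (ν * ‖q‖) ≤ t * ‖w‖ := by nlinarith
    rw [ht_def] at ht2 hkey
    nlinarith [norm_nonneg q]
  exact le_max_of_le_right hfinal
end

section
/- Let f : ℝⁿ → ℝ, h : ℝⁿ → ℝ ∪ {+∞}, A : ℝⁿ → ℝˡ linear, b ∈ ℝˡ, and c > 0. Let σ ∈ (0, 1/2) and C_σ := 2(1 − σ)²/(1 − 2σ). Let λ > 0, let z⁻, z ∈ ℝⁿ with h(z⁻) and h(z) finite, let u ∈ ℝⁿ, set w := (u + z⁻ − z)/λ, let p⁻ ∈ ℝˡ, and set p := p⁻ + c(Az − b). Assume (i) ‖u‖ ≤ σ λ ‖w‖/(1 − σ), and (ii) λ L_c(z⁻; p⁻) − [λ L_c(z; p⁻) + (1/2)‖z − z⁻‖²]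 ≥ ⟨u, z⁻ − z⟩. Then (λ/C_σ)‖w‖² ≤ L_c(z⁻; p⁻) − L_c(z; p) + (1/c)‖p − p⁻‖². -/
open scoped RealInnerProductSpace

/-- The augmented Lagrangian
`L_c(z; p) := f(z) + h(z) + ⟨p, Az − b⟩ + (c/2)‖Az − b‖²`. -/
noncomputable def augL {n l : ℕ} (f : EuclideanSpace ℝ (Fin n) → ℝ)
    (h : EuclideanSpace ℝ (Fin n) → EReal)
    (A : EuclideanSpace ℝ (Fin n) →ₗ[ℝ] EuclideanSpace ℝ (Fin l))
    (b : EuclideanSpace ℝ (Fin l)) (c : ℝ)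
    (z : EuclideanSpace ℝ (Fin n)) (p : EuclideanSpace ℝ (Fin l)) : EReal :=
  (f z : EReal) + h z + ((⟪p, A z - b⟫ + c / 2 * ‖A z - b‖ ^ 2 : ℝ) : EReal)

/-- With `σ ∈ (0, 1/2)`, `C_σ := 2(1 − σ)²/(1 − 2σ)`, `λ > 0`,
`w := (u + z⁻ − z)/λ`, `p := p⁻ + c(Az − b)`, if
(i) `‖u‖ ≤ σλ‖w‖/(1 − σ)` and
(ii) `λ L_c(z⁻; p⁻) − [λ L_c(z; p⁻) + (1/2)‖z − z⁻‖²] ≥ ⟨u, z⁻ − z⟩`, then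
`(λ/C_σ)‖w‖² ≤ L_c(z⁻; p⁻) − L_c(z; p) + (1/c)‖p − p⁻‖²`. -/
theorem stmt5 {n l : ℕ} (f : EuclideanSpace ℝ (Fin n) → ℝ)
    (h : EuclideanSpace ℝ (Fin n) → EReal)
    (A : EuclideanSpace ℝ (Fin n) →ₗ[ℝ] EuclideanSpace ℝ (Fin l))
    (b : EuclideanSpace ℝ (Fin l)) (c : ℝ) (hc : 0 < c)
    (σ : ℝ) (hσ1 : 0 < σ) (hσ2 : σ < 1 / 2)
    (Cσ : ℝ) (hCσ : Cσ = 2 * (1 - σ) ^ 2 / (1 - 2 * σ))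
    (lam : ℝ) (hlam : 0 < lam)
    (zminus z : EuclideanSpace ℝ (Fin n))
    (hzm : h zminus ≠ ⊤ ∧ h zminus ≠ ⊥) (hz : h z ≠ ⊤ ∧ h z ≠ ⊥)
    (u w : EuclideanSpace ℝ (Fin n)) (hw : w = (1 / lam) • (u + zminus - z))
    (pminus p : EuclideanSpace ℝ (Fin l)) (hp : p = pminus + c • (A z - b))
    (hi : ‖u‖ ≤ σ * lam * ‖w‖ / (1 - σ))
    (hii : ((⟪u, zminus - z⟫ : ℝ) : EReal) ≤
      (lam : EReal) * augL f h A b c zminus pminus -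
        ((lam : EReal) * augL f h A b c z pminus + ((1 / 2 * ‖z - zminus‖ ^ 2 : ℝ) : EReal))) :
    ((lam / Cσ * ‖w‖ ^ 2 : ℝ) : EReal) ≤
      augL f h A b c zminus pminus - augL f h A b c z p
        + ((1 / c * ‖p - pminus‖ ^ 2 : ℝ) : EReal) := by

  obtain ⟨hmt, hmb⟩ := hzm
  obtain ⟨hzt, hzb⟩ := hz
  have e1 : augL f h A b c zminus pminus =
      (((f zminus + (h zminus).toReal +
        (⟪pminus, A zminus - b⟫ + c / 2 * ‖A zminus - b‖ ^ 2)) : ℝ) : EReal) := by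
    rw [augL, ← EReal.coe_toReal hmt hmb]; norm_cast
  have e2 : augL f h A b c z pminus =
      (((f z + (h z).toReal +
        (⟪pminus, A z - b⟫ + c / 2 * ‖A z - b‖ ^ 2)) : ℝ) : EReal) := by
    rw [augL, ← EReal.coe_toReal hzt hzb]; norm_cast
  have e3 : augL f h A b c z p =
      (((f z + (h z).toReal +
        (⟪p, A z - b⟫ + c / 2 * ‖A z - b‖ ^ 2)) : ℝ) : EReal) := by
    rw [augL, ← EReal.coe_toReal hzt hzb]; norm_cast
  rw [e1, e2] at hii
  rw [e1, e3]
  have hii' : (⟪u, zminus - z⟫ : ℝ) ≤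
      lam * (f zminus + (h zminus).toReal +
        (⟪pminus, A zminus - b⟫ + c / 2 * ‖A zminus - b‖ ^ 2)) -
      (lam * (f z + (h z).toReal + (⟪pminus, A z - b⟫ + c / 2 * ‖A z - b‖ ^ 2))
        + 1 / 2 * ‖z - zminus‖ ^ 2) := by exact_mod_cast hii
  have goalr : (lam / Cσ * ‖w‖ ^ 2 : ℝ) ≤
      (f zminus + (h zminus).toReal +
        (⟪pminus, A zminus - b⟫ + c / 2 * ‖A zminus - b‖ ^ 2)) -
      (f z + (h z).toReal + (⟪p, A z - b⟫ + c / 2 * ‖A z - b‖ ^ 2))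
        + 1 / c * ‖p - pminus‖ ^ 2 := by
    have h3 : (⟪p, A z - b⟫ : ℝ) = ⟪pminus, A z - b⟫ + c * ‖A z - b‖ ^ 2 := by
      rw [hp, inner_add_left, real_inner_smul_left, real_inner_self_eq_norm_sq]
    have h4 : 1 / c * ‖p - pminus‖ ^ 2 = c * ‖A z - b‖ ^ 2 := by
      rw [hp, add_sub_cancel_left, norm_smul, mul_pow, Real.norm_eq_abs, abs_of_pos hc]
      field_simp
    have hzz : zminus - z = lam • w - u := by
      rw [hw, smul_smul, mul_one_div, div_self hlam.ne', one_smul]; abel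
    have h1 : (⟪u, zminus - z⟫ : ℝ) = lam * ⟪u, w⟫ - ‖u‖ ^ 2 := by
      rw [hzz, inner_sub_right, real_inner_smul_right, real_inner_self_eq_norm_sq]
    have h2 : ‖z - zminus‖ ^ 2 = lam ^ 2 * ‖w‖ ^ 2 - 2 * lam * ⟪u, w⟫ + ‖u‖ ^ 2 := by
      rw [← norm_neg, neg_sub, hzz, norm_sub_sq_real, norm_smul, real_inner_smul_left,
        Real.norm_eq_abs, abs_of_pos hlam, real_inner_comm]
      ring
    have hσ3 : 0 < 1 - 2 * σ := by linarith
    have hσ4 : 0 < 1 - σ := by linarith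
    have key : (1 - σ) * ‖u‖ ≤ σ * lam * ‖w‖ := by
      rw [le_div_iff₀ hσ4] at hi; linarith
    have key2 : ((1 - σ) * ‖u‖) ^ 2 ≤ (σ * lam * ‖w‖) ^ 2 := by
      have := mul_le_mul key key (by positivity) (by positivity)
      nlinarith [this]
    rw [h1, h2] at hii'
    rw [h3, h4, hCσ]
    have hC : lam / (2 * (1 - σ) ^ 2 / (1 - 2 * σ)) = lam * (1 - 2 * σ) / (2 * (1 - σ) ^ 2) := by
      rw [div_div_eq_mul_div]
    rw [hC, div_mul_eq_mul_div, div_le_iff₀ (by positivity : (0:ℝ) < 2 * (1 - σ) ^ 2)]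
    refine le_of_mul_le_mul_left ?_ hlam
    linarith [key2, mul_le_mul_of_nonneg_left hii' (sq_nonneg (1 - σ))]
  exact_mod_cast goalr
end

section
/- Let h : ℝⁿ → ℝ ∪ {+∞} be a proper convex function whose domain H := {x : h(x) < +∞} is compact with diameter D_h := sup{‖z − z'‖ : z, z' ∈ H}, and suppose h is M_h-Lipschitz continuous on H. Let A : ℝⁿ → ℝˡ be a nonzero linear map and suppose there exists z̄ in the interior of H with A z̄ = b; set d̄ := dist(z̄, ∂H). Let ν > 0 be such that ν‖q'‖ ≤ ‖A*q'‖ for every q' in the range of A, and let R ≥ 0. Let sequences {z_k}_{k≥1} ⊂ H, {c_k}_{k≥1} ⊂ (0, ∞), {p_k}_{k≥0} ⊂ ℝˡ, and {r_k}_{k≥1} ⊂ ℝⁿ satisfy p_0 = 0, p_k = p_{k−1} + c_k(A z_k − b), r_k − A*p_k ∈ ∂h(z_k), and ‖r_k‖ ≤ R for all k ≥ 1. Then ‖p_k‖ ≤ 2 D_h (M_h + R)/(d̄ ν) for all k ≥ 0. -/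
open Metric
open scoped RealInnerProductSpace

/-!
The multipliers stay in the range of `A`, so `ν ‖p_k‖ ≤ ‖A* p_k‖`. Subgradient inequality plus
Lipschitz continuity give `⟪A* p_k, z_k - z'⟫ ≤ (M + R) D` for every `z' ∈ H`. Testing this at the
point `z' = z̄ - (d̄/2) A* p_k / ‖A* p_k‖` of the Slater ball shows that whenever
`⟪p_k, A z_k - b⟫ ≥ 0` the multiplier is already below the bound `2 D (M + R) / (d̄ ν)`; in the
other case the update `p_k = p_{k-1} + c_k (A z_k - b)` does not increase `‖p_k‖`.
-/

section Slater

variable {E : Type*} [NormedAddCommGroup E] [NormedSpace ℝ E] [Nontrivial E]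
  {K : Set E} {x : E}

theorem IsCompact.ball_infDist_frontier_subset (hK : IsCompact K) (hx : x ∈ K) :
    ball x (infDist x (frontier K)) ⊆ K := by
  obtain ⟨y, hy, hdist⟩ := hK.exists_mem_frontier_infDist_compl_eq_dist hx
  refine (ball_subset_ball ?_).trans ball_infDist_compl_subset
  exact hdist ▸ infDist_le_dist_of_mem hy

theorem IsCompact.infDist_frontier_pos (hK : IsCompact K) (hx : x ∈ interior K) :
    0 < infDist x (frontier K) := by
  obtain ⟨y, hy, -⟩ := hK.exists_mem_frontier_infDist_compl_eq_dist (interior_subset hx)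
  exact (isClosed_frontier.notMem_iff_infDist_pos ⟨y, hy⟩).mp fun hfr => hfr.2 hx

end Slater

theorem nonneg_of_le_add_mul_norm {E : Type*} [NormedAddCommGroup E] {f : E → ℝ} {s : Set E}
    {M : ℝ} (hf : ∀ x ∈ s, ∀ y ∈ s, f x ≤ f y + M * ‖x - y‖) {x y : E} (hx : x ∈ s) (hy : y ∈ s)
    (hxy : x ≠ y) : 0 ≤ M := by
  have hpos : 0 < ‖x - y‖ := norm_pos_iff.mpr (sub_ne_zero.mpr hxy)
  have h₁ := hf x hx y hy
  have h₂ := hf y hy x hx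
  rw [norm_sub_rev] at h₂
  nlinarith

section InnerProduct

variable {E : Type*} [NormedAddCommGroup E] [InnerProductSpace ℝ E]

theorem inner_sub_le_of_subgradient {f : E → ℝ} {s : Set E} {M R : ℝ}
    (hs : Bornology.IsBounded s) (hMR : 0 ≤ M + R)
    (hf : ∀ x ∈ s, ∀ y ∈ s, f x ≤ f y + M * ‖x - y‖) {z r v : E} (hz : z ∈ s) (hr : ‖r‖ ≤ R)
    (hsub : ∀ z' ∈ s, f z + ⟪r - v, z' - z⟫ ≤ f z') {z' : E} (hz' : z' ∈ s) :
    ⟪v, z - z'⟫ ≤ diam s * (M + R) := by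
  have hlip := hf z' hz' z hz
  have hsub' := hsub z' hz'
  have hr' : ⟪r, z - z'⟫ ≤ R * ‖z - z'‖ :=
    (real_inner_le_norm r _).trans (mul_le_mul_of_nonneg_right hr (norm_nonneg _))
  have hdiam : ‖z - z'‖ ≤ diam s := dist_eq_norm z z' ▸ dist_le_diam_of_mem hs hz hz'
  rw [inner_sub_left, ← neg_sub z, inner_neg_right, inner_neg_right] at hsub'
  rw [norm_sub_rev] at hlip
  nlinarith

theorem inner_add_mul_norm_le_of_forall_closedBall {q z x : E} {t K : ℝ} (ht : 0 ≤ t)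
    (hK : ∀ y ∈ closedBall x t, ⟪q, z - y⟫ ≤ K) : ⟪q, z - x⟫ + t * ‖q‖ ≤ K := by
  rcases eq_or_ne q 0 with rfl | hq
  · simpa using hK x (mem_closedBall_self ht)
  have hqn : 0 < ‖q‖ := norm_pos_iff.mpr hq
  set y := x - (t / ‖q‖) • q
  have hy : y ∈ closedBall x t := by
    rw [mem_closedBall, dist_eq_norm, sub_sub_cancel_left, norm_neg, norm_smul,
      Real.norm_of_nonneg (by positivity), div_mul_cancel₀ _ hqn.ne']
  have hzy : ⟪q, z - y⟫ = ⟪q, z - x⟫ + t * ‖q‖ := by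
    rw [sub_sub_eq_add_sub, add_sub_right_comm, inner_add_right, real_inner_smul_right,
      real_inner_self_eq_norm_sq]
    field_simp
  exact hzy ▸ hK y hy

theorem norm_add_smul_le_of_inner_nonpos {p u : E} {c : ℝ} (hc : 0 ≤ c)
    (h : ⟪p + c • u, u⟫ ≤ 0) : ‖p + c • u‖ ≤ ‖p‖ := by
  have hsq : ‖p + c • u‖ ^ 2 ≤ ‖p + c • u‖ * ‖p‖ :=
    calc ‖p + c • u‖ ^ 2 = ⟪p + c • u, p⟫ + c * ⟪p + c • u, u⟫ := by
          rw [← real_inner_self_eq_norm_sq, inner_add_right, real_inner_smul_right]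
      _ ≤ ⟪p + c • u, p⟫ := by nlinarith
      _ ≤ ‖p + c • u‖ * ‖p‖ := real_inner_le_norm _ _
  nlinarith [norm_nonneg (p + c • u), norm_nonneg p]

end InnerProduct

theorem multiplier_mem_range {R E F : Type*} [Ring R] [AddCommGroup E] [Module R E]
    [AddCommGroup F] [Module R F] {A : E →ₗ[R] F} {b : F} {zbar : E} {z : ℕ → E} {c : ℕ → R}
    {p : ℕ → F} (hAzbar : A zbar = b) (hp0 : p 0 = 0)
    (hpk : ∀ k, 1 ≤ k → p k = p (k - 1) + c k • (A (z k) - b)) (k : ℕ) :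
    p k ∈ LinearMap.range A := by
  induction k with
  | zero => exact hp0 ▸ zero_mem _
  | succ k ih =>
    rw [hpk (k + 1) k.succ_pos, Nat.add_sub_cancel, ← hAzbar, ← map_sub]
    exact add_mem ih (Submodule.smul_mem _ _ (LinearMap.mem_range_self _ _))

section Multipliers

variable {E F : Type*} [NormedAddCommGroup E] [InnerProductSpace ℝ E] [FiniteDimensional ℝ E]
  [NormedAddCommGroup F] [InnerProductSpace ℝ F] [FiniteDimensional ℝ F]
  {A : E →ₗ[ℝ] F} {b : F} {zbar : E} {d ν K : ℝ}

theorem norm_le_of_inner_nonneg {p : F} {z : E} (hd : 0 < d) (hν : 0 < ν) (hAzbar : A zbar = b)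
    (hK : ∀ z' ∈ ball zbar d, ⟪LinearMap.adjoint A p, z - z'⟫ ≤ K)
    (hνp : ν * ‖p‖ ≤ ‖LinearMap.adjoint A p‖) (hinner : 0 ≤ ⟪p, A z - b⟫) :
    ‖p‖ ≤ 2 * K / (d * ν) := by
  have hsupp := inner_add_mul_norm_le_of_forall_closedBall (half_pos hd).le
    fun y hy => hK y (closedBall_subset_ball (half_lt_self hd) hy)
  rw [LinearMap.adjoint_inner_left, map_sub, hAzbar] at hsupp
  rw [le_div_iff₀ (by positivity)]
  nlinarith [mul_le_mul_of_nonneg_left hνp hd.le]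

variable {z : ℕ → E} {c : ℕ → ℝ} {p : ℕ → F}

theorem norm_multiplier_le (hd : 0 < d) (hν : 0 < ν) (hK0 : 0 ≤ K) (hAzbar : A zbar = b)
    (hνA : ∀ q ∈ LinearMap.range A, ν * ‖q‖ ≤ ‖LinearMap.adjoint A q‖) (hp0 : p 0 = 0)
    (hc : ∀ k, 1 ≤ k → 0 ≤ c k) (hpk : ∀ k, 1 ≤ k → p k = p (k - 1) + c k • (A (z k) - b))
    (hK : ∀ k, 1 ≤ k → ∀ z' ∈ ball zbar d, ⟪LinearMap.adjoint A (p k), z k - z'⟫ ≤ K) (k : ℕ) :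
    ‖p k‖ ≤ 2 * K / (d * ν) := by
  induction k with
  | zero => rw [hp0, norm_zero]; positivity
  | succ k ih =>
    rcases le_or_gt 0 ⟪p (k + 1), A (z (k + 1)) - b⟫ with hinner | hinner
    · exact norm_le_of_inner_nonneg hd hν hAzbar (hK _ k.succ_pos)
        (hνA _ (multiplier_mem_range hAzbar hp0 hpk _)) hinner
    · have hstep := hpk (k + 1) k.succ_pos
      rw [Nat.add_sub_cancel] at hstep
      rw [hstep] at hinner ⊢
      exact (norm_add_smul_le_of_inner_nonpos (hc _ k.succ_pos) hinner.le).trans ih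

end Multipliers

theorem stmt6_general {n l : ℕ} (h : EuclideanSpace ℝ (Fin n) → EReal)
    (hbot : ∀ x, h x ≠ ⊥)
    (H : Set (EuclideanSpace ℝ (Fin n))) (hH : H = {x | h x < ⊤})
    (hcompact : IsCompact H)
    (M : ℝ)
    (hlip : ∀ x ∈ H, ∀ y ∈ H, h x ≤ h y + ((M * ‖x - y‖ : ℝ) : EReal))
    (A : EuclideanSpace ℝ (Fin n) →ₗ[ℝ] EuclideanSpace ℝ (Fin l))
    (hA : A ≠ 0) (b : EuclideanSpace ℝ (Fin l))
    (zbar : EuclideanSpace ℝ (Fin n)) (hzbar : zbar ∈ interior H) (hAzbar : A zbar = b)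
    (ν : ℝ) (hν : 0 < ν)
    (hνA : ∀ q' ∈ LinearMap.range A, ν * ‖q'‖ ≤ ‖LinearMap.adjoint A q'‖)
    (R : ℝ) (hR : 0 ≤ R)
    (z : ℕ → EuclideanSpace ℝ (Fin n)) (c : ℕ → ℝ)
    (p : ℕ → EuclideanSpace ℝ (Fin l)) (r : ℕ → EuclideanSpace ℝ (Fin n))
    (hp0 : p 0 = 0)
    (hzH : ∀ k, 1 ≤ k → z k ∈ H)
    (hc : ∀ k, 1 ≤ k → 0 < c k)
    (hpk : ∀ k, 1 ≤ k → p k = p (k - 1) + c k • (A (z k) - b))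
    (hsub : ∀ k, 1 ≤ k → ∀ z',
      h (z k) + ((⟪r k - LinearMap.adjoint A (p k), z' - z k⟫ : ℝ) : EReal) ≤ h z')
    (hrR : ∀ k, 1 ≤ k → ‖r k‖ ≤ R) :
    ∀ k : ℕ, ‖p k‖ ≤ 2 * Metric.diam H * (M + R) / (Metric.infDist zbar (frontier H) * ν) := by
  obtain ⟨x, hx⟩ := DFunLike.ne_iff.mp hA
  have : Nontrivial (EuclideanSpace ℝ (Fin n)) := nontrivial_of_ne x 0 fun h0 => hx (by simp [h0])
  have hzbarH : zbar ∈ H := interior_subset hzbar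
  have hd := hcompact.infDist_frontier_pos hzbar
  have hball := hcompact.ball_infDist_frontier_subset hzbarH
  have hfin : ∀ x ∈ H, ((h x).toReal : EReal) = h x := fun x hx =>
    EReal.coe_toReal (by rw [hH] at hx; exact hx.ne) (hbot x)
  have hlipR : ∀ x ∈ H, ∀ y ∈ H, (h x).toReal ≤ (h y).toReal + M * ‖x - y‖ := by
    intro x hx y hy
    have := hlip x hx y hy
    rwa [← hfin x hx, ← hfin y hy, ← EReal.coe_add, EReal.coe_le_coe_iff] at this
  have hsubR : ∀ k, 1 ≤ k → ∀ z' ∈ H, (h (z k)).toReal +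
      ⟪r k - LinearMap.adjoint A (p k), z' - z k⟫ ≤ (h z').toReal := by
    intro k hk z' hz'
    have := hsub k hk z'
    rwa [← hfin _ (hzH k hk), ← hfin z' hz', ← EReal.coe_add, EReal.coe_le_coe_iff] at this
  obtain ⟨y, hy⟩ := (NormedSpace.sphere_nonempty (x := zbar)).mpr (half_pos hd).le
  have hyH : y ∈ H := hball (sphere_subset_ball (half_lt_self hd) hy)
  have hM := nonneg_of_le_add_mul_norm hlipR hyH hzbarH
    (ne_of_mem_sphere hy (half_pos hd).ne')
  have hkey : ∀ k, 1 ≤ k → ∀ z' ∈ ball zbar (infDist zbar (frontier H)),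
      ⟪LinearMap.adjoint A (p k), z k - z'⟫ ≤ diam H * (M + R) := fun k hk z' hz' =>
    inner_sub_le_of_subgradient hcompact.isBounded (by linarith) hlipR (hzH k hk) (hrR k hk)
      (hsubR k hk) (hball hz')
  intro k
  rw [mul_assoc]
  exact norm_multiplier_le hd hν (by positivity) hAzbar hνA hp0 (fun k hk => (hc k hk).le) hpk
    hkey k

/-- Boundedness of the Lagrange multiplier sequence: with `h` proper
convex (modeled as `EReal`-valued, never `⊥`), compact domain `H := {x | h x < ⊤}`,
`M`-Lipschitz on `H`; `A` nonzero linear with a Slater point `z̄ ∈ interior H`,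
`A z̄ = b`, `d̄ := dist(z̄, ∂H)`; `ν > 0` with `ν‖q'‖ ≤ ‖A*q'‖` on the range of `A`;
and `R ≥ 0`.  If the sequences satisfy `p₀ = 0`, `p_k = p_{k−1} + c_k(A z_k − b)`,
`r_k − A* p_k ∈ ∂h(z_k)` and `‖r_k‖ ≤ R` for `k ≥ 1` (with `z_k ∈ H`, `c_k > 0`), then
`‖p_k‖ ≤ 2 D_h (M + R)/(d̄ ν)` for all `k ≥ 0`. -/
theorem stmt6 {n l : ℕ} (h : EuclideanSpace ℝ (Fin n) → EReal)
    (hbot : ∀ x, h x ≠ ⊥)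
    (hconv : ∀ x y : EuclideanSpace ℝ (Fin n), ∀ a b : ℝ, 0 ≤ a → 0 ≤ b → a + b = 1 →
      h (a • x + b • y) ≤ (a : EReal) * h x + (b : EReal) * h y)
    (H : Set (EuclideanSpace ℝ (Fin n))) (hH : H = {x | h x < ⊤})
    (hne : H.Nonempty)
    (hcompact : IsCompact H)
    (M : ℝ)
    (hlip : ∀ x ∈ H, ∀ y ∈ H, h x ≤ h y + ((M * ‖x - y‖ : ℝ) : EReal))
    (A : EuclideanSpace ℝ (Fin n) →ₗ[ℝ] EuclideanSpace ℝ (Fin l))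
    (hA : A ≠ 0) (b : EuclideanSpace ℝ (Fin l))
    (zbar : EuclideanSpace ℝ (Fin n)) (hzbar : zbar ∈ interior H) (hAzbar : A zbar = b)
    (ν : ℝ) (hν : 0 < ν)
    (hνA : ∀ q' ∈ LinearMap.range A, ν * ‖q'‖ ≤ ‖LinearMap.adjoint A q'‖)
    (R : ℝ) (hR : 0 ≤ R)
    (z : ℕ → EuclideanSpace ℝ (Fin n)) (c : ℕ → ℝ)
    (p : ℕ → EuclideanSpace ℝ (Fin l)) (r : ℕ → EuclideanSpace ℝ (Fin n))
    (hp0 : p 0 = 0)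
    (hzH : ∀ k, 1 ≤ k → z k ∈ H)
    (hc : ∀ k, 1 ≤ k → 0 < c k)
    (hpk : ∀ k, 1 ≤ k → p k = p (k - 1) + c k • (A (z k) - b))
    (hsub : ∀ k, 1 ≤ k → ∀ z',
      h (z k) + ((⟪r k - LinearMap.adjoint A (p k), z' - z k⟫ : ℝ) : EReal) ≤ h z')
    (hrR : ∀ k, 1 ≤ k → ‖r k‖ ≤ R) :
    ∀ k : ℕ, ‖p k‖ ≤ 2 * Metric.diam H * (M + R) / (Metric.infDist zbar (frontier H) * ν) :=
  stmt6_general h hbot H hH hcompact M hlip A hA b zbar hzbar hAzbar ν hν hνA R hR z c p r hp0 hzH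
    hc hpk hsub hrR
end

section
/- Let f : ℝⁿ → ℝ, h : ℝⁿ → ℝ ∪ {+∞}, A : ℝⁿ → ℝˡ linear, b ∈ ℝˡ, and c > 0. Let σ ∈ (0, 1/2), C_σ := 2(1 − σ)²/(1 − 2σ), λ̲ > 0, and κ ≥ 0. Let integers k̂ < k and sequences z_i ∈ ℝⁿ with h(z_i) finite (k̂ ≤ i ≤ k), p_i ∈ ℝˡ (k̂ − 1 ≤ i ≤ k), λ_i ≥ λ̲ and w_i ∈ ℝⁿ (k̂ + 1 ≤ i ≤ k) satisfy: (i) p_i = p_{i−1} + c(A z_i − b) for k̂ ≤ i ≤ k; (ii) ‖p_i‖ ≤ κ for k̂ − 1 ≤ i ≤ k; (iii) ((1 − 2σ)/(2(1 − σ)²)) λ_i ‖w_i‖² ≤ L_c(z_{i−1}; p_{i−1}) − L_c(z_i; p_i) + (1/c)‖p_i − p_{i−1}‖² for k̂ + 1 ≤ i ≤ k. Define Δ_k := (Σ_{i=k̂+1}^{k} λ_i)^{−1}[L_c(z_{k̂}; p_{k̂−1}) − L_c(z_k; p_k) − ‖p_k‖²/(2c)]. Then (Σ_{i=k̂+1}^{k}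 λ_i ‖w_i‖²)/(Σ_{i=k̂+1}^{k} λ_i) ≤ C_σ (Δ_k + 9κ²/(λ̲ c)). -/
/-!
Summing the descent inequalities (iii) telescopes the Lagrangian values, and each multiplier
jump costs `(1/c)‖p_i − p_{i−1}‖² ≤ 4κ²/c ≤ (4κ²/(λ̲c)) λ_i`. By the update (i) at `i = k̂`,
`L_c(z_k̂; p_k̂)` exceeds `L_c(z_k̂; p_{k̂−1})` by one more such jump, which together with
`‖p_k‖²/(2c) ≤ κ²/c` costs at most `5κ²/c ≤ (5κ²/(λ̲c)) Σ λ_i`. Dividing by `Σ λ_i` gives the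
bound, `C_σ` being the reciprocal of the descent constant `(1 − 2σ)/(2(1 − σ)²)`.
-/

open scoped RealInnerProductSpace

open Finset

theorem Int.sum_Icc_sub_telescope {M : Type*} [AddCommGroup M] (g : ℤ → M) {a b : ℤ}
    (hab : a ≤ b) : ∑ i ∈ Icc (a + 1) b, (g (i - 1) - g i) = g a - g b := by
  induction b, hab using Int.leInduction with
  | base => simp
  | succ b hab ih =>
    rw [← insert_Icc_right_eq_Icc_add_one (by omega), sum_insert (by simp), ih,
      add_sub_cancel_right]
    abel

theorem norm_sub_sq_le_of_norm_le {E : Type*} [SeminormedAddCommGroup E] {x y : E} {κ : ℝ}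
    (hx : ‖x‖ ≤ κ) (hy : ‖y‖ ≤ κ) : ‖x - y‖ ^ 2 ≤ 4 * κ ^ 2 := by
  have : ‖x - y‖ ≤ 2 * κ := by linarith [norm_sub_le x y]
  nlinarith [norm_nonneg (x - y)]

section AugmentedLagrangian

variable {n l : ℕ} (f : EuclideanSpace ℝ (Fin n) → ℝ)
  (h : EuclideanSpace ℝ (Fin n) → EReal)
  (A : EuclideanSpace ℝ (Fin n) →ₗ[ℝ] EuclideanSpace ℝ (Fin l))
  (b : EuclideanSpace ℝ (Fin l)) (c : ℝ) (z : EuclideanSpace ℝ (Fin n))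

theorem augL_add_multiplier (p q : EuclideanSpace ℝ (Fin l)) :
    augL f h A b c z (p + q) = augL f h A b c z p + ((⟪q, A z - b⟫ : ℝ) : EReal) := by
  rw [augL, augL, add_assoc _ _ ((⟪q, A z - b⟫ : ℝ) : EReal), ← EReal.coe_add,
    inner_add_left]
  congr 2
  ring

theorem augL_multiplier_update (hc : c ≠ 0) {p p' : EuclideanSpace ℝ (Fin l)}
    (hp' : p' = p + c • (A z - b)) :
    augL f h A b c z p' = augL f h A b c z p + ((1 / c * ‖p' - p‖ ^ 2 : ℝ) : EReal) := by
  rw [hp', augL_add_multiplier, add_sub_cancel_left, real_inner_smul_left,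
    real_inner_self_eq_norm_sq, norm_smul, Real.norm_eq_abs, mul_pow, sq_abs]
  congr 2
  field_simp

theorem coe_toReal_augL (p : EuclideanSpace ℝ (Fin l)) (htop : h z ≠ ⊤) (hbot : h z ≠ ⊥) :
    ((augL f h A b c z p).toReal : EReal) = augL f h A b c z p := by
  obtain ⟨r, hr⟩ : ∃ r : ℝ, h z = r := ⟨_, (EReal.coe_toReal htop hbot).symm⟩
  simp only [augL, hr, ← EReal.coe_add, EReal.toReal_coe]

end AugmentedLagrangian

section Descent

variable {E : Type*} [SeminormedAddCommGroup E] {D c lamLB κ : ℝ} {khat k : ℤ}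
  {ℓ : ℤ → ℝ} {ℓ₀ : ℝ} {p : ℤ → E} {lam v : ℤ → ℝ}

theorem mul_sum_le_of_descent (hc : 0 < c) (hlamLB : 0 < lamLB) (hk : khat < k)
    (hlam : ∀ i ∈ Icc (khat + 1) k, lamLB ≤ lam i)
    (hpbd : ∀ i, khat - 1 ≤ i → i ≤ k → ‖p i‖ ≤ κ)
    (hstart : ℓ khat = ℓ₀ + 1 / c * ‖p khat - p (khat - 1)‖ ^ 2)
    (hdescent : ∀ i ∈ Icc (khat + 1) k,
      D * lam i * v i ≤ ℓ (i - 1) - ℓ i + 1 / c * ‖p i - p (i - 1)‖ ^ 2) :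
    D * ∑ i ∈ Icc (khat + 1) k, lam i * v i ≤ ℓ₀ - ℓ k - ‖p k‖ ^ 2 / (2 * c) +
      9 * κ ^ 2 / (lamLB * c) * ∑ i ∈ Icc (khat + 1) k, lam i := by
  set S := ∑ i ∈ Icc (khat + 1) k, lam i
  have hk_mem : k ∈ Icc (khat + 1) k := mem_Icc.2 ⟨by omega, le_rfl⟩
  have hS : lamLB ≤ S := (hlam k hk_mem).trans
    (single_le_sum (fun i hi ↦ hlamLB.le.trans (hlam i hi)) hk_mem)
  have hscale : ∀ t, lamLB ≤ t → κ ^ 2 / c ≤ κ ^ 2 / (lamLB * c) * t := fun t ht ↦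
    calc κ ^ 2 / c = κ ^ 2 / (lamLB * c) * lamLB := by field_simp
      _ ≤ κ ^ 2 / (lamLB * c) * t := by gcongr
  have hjump : ∀ i, khat ≤ i → i ≤ k → 1 / c * ‖p i - p (i - 1)‖ ^ 2 ≤ 4 * (κ ^ 2 / c) :=
    fun i hi hik ↦ calc
      1 / c * ‖p i - p (i - 1)‖ ^ 2 ≤ 1 / c * (4 * κ ^ 2) := by
        gcongr
        exact norm_sub_sq_le_of_norm_le (hpbd i (by omega) hik) (hpbd _ (by omega) (by omega))
      _ = 4 * (κ ^ 2 / c) := by ring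
  have htelescope : D * ∑ i ∈ Icc (khat + 1) k, lam i * v i ≤
      ℓ khat - ℓ k + ∑ i ∈ Icc (khat + 1) k, 1 / c * ‖p i - p (i - 1)‖ ^ 2 := by
    rw [mul_sum, ← Int.sum_Icc_sub_telescope ℓ hk.le, ← sum_add_distrib]
    exact sum_le_sum fun i hi ↦ (mul_assoc D _ _).symm ▸ hdescent i hi
  have hjumps : ∑ i ∈ Icc (khat + 1) k, 1 / c * ‖p i - p (i - 1)‖ ^ 2 ≤
      4 * (κ ^ 2 / (lamLB * c)) * S := by
    rw [mul_assoc, mul_sum, mul_sum]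
    refine sum_le_sum fun i hi ↦ ?_
    have hi' := mem_Icc.1 hi
    linarith [hjump i (by omega) hi'.2, hscale _ (hlam i hi)]
  have hlast : ‖p k‖ ^ 2 / (2 * c) ≤ κ ^ 2 / c :=
    calc ‖p k‖ ^ 2 / (2 * c) ≤ κ ^ 2 / (2 * c) := by gcongr; exact hpbd k (by omega) le_rfl
      _ ≤ κ ^ 2 / c := by gcongr; linarith
  have : 9 * κ ^ 2 / (lamLB * c) * S = 9 * (κ ^ 2 / (lamLB * c) * S) := by ring
  linarith [hjump khat le_rfl hk.le, hscale S hS]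

theorem sum_div_sum_le_of_descent (hD : 0 < D) (hc : 0 < c) (hlamLB : 0 < lamLB)
    (hk : khat < k) (hlam : ∀ i ∈ Icc (khat + 1) k, lamLB ≤ lam i)
    (hpbd : ∀ i, khat - 1 ≤ i → i ≤ k → ‖p i‖ ≤ κ)
    (hstart : ℓ khat = ℓ₀ + 1 / c * ‖p khat - p (khat - 1)‖ ^ 2)
    (hdescent : ∀ i ∈ Icc (khat + 1) k,
      D * lam i * v i ≤ ℓ (i - 1) - ℓ i + 1 / c * ‖p i - p (i - 1)‖ ^ 2) :
    (∑ i ∈ Icc (khat + 1) k, lam i * v i) / ∑ i ∈ Icc (khat + 1) k, lam i ≤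
      D⁻¹ * ((∑ i ∈ Icc (khat + 1) k, lam i)⁻¹ * (ℓ₀ - ℓ k - ‖p k‖ ^ 2 / (2 * c)) +
        9 * κ ^ 2 / (lamLB * c)) := by
  have hsum := mul_sum_le_of_descent hc hlamLB hk hlam hpbd hstart hdescent
  set S := ∑ i ∈ Icc (khat + 1) k, lam i
  have hS : 0 < S :=
    sum_pos (fun i hi ↦ hlamLB.trans_le (hlam i hi)) ⟨k, mem_Icc.2 ⟨by omega, le_rfl⟩⟩
  calc (∑ i ∈ Icc (khat + 1) k, lam i * v i) / S
      ≤ D⁻¹ * (ℓ₀ - ℓ k - ‖p k‖ ^ 2 / (2 * c) + 9 * κ ^ 2 / (lamLB * c) * S) / S := by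
        gcongr
        rwa [le_inv_mul_iff₀ hD]
    _ = _ := by field_simp

end Descent

theorem stmt7_general {n l : ℕ} (f : EuclideanSpace ℝ (Fin n) → ℝ)
    (h : EuclideanSpace ℝ (Fin n) → EReal)
    (A : EuclideanSpace ℝ (Fin n) →ₗ[ℝ] EuclideanSpace ℝ (Fin l))
    (b : EuclideanSpace ℝ (Fin l)) (c : ℝ) (hc : 0 < c)
    (σ : ℝ) (hσ2 : σ < 1 / 2)
    (Cσ : ℝ) (hCσ : Cσ = 2 * (1 - σ) ^ 2 / (1 - 2 * σ))
    (lamLB κ : ℝ) (hlamLB : 0 < lamLB)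
    (khat k : ℤ) (hkhatk : khat < k)
    (z : ℤ → EuclideanSpace ℝ (Fin n)) (p : ℤ → EuclideanSpace ℝ (Fin l))
    (lam : ℤ → ℝ) (w : ℤ → EuclideanSpace ℝ (Fin n))
    (hzfin : ∀ i, khat ≤ i → i ≤ k → h (z i) ≠ ⊤ ∧ h (z i) ≠ ⊥)
    (hlam : ∀ i, khat + 1 ≤ i → i ≤ k → lamLB ≤ lam i)
    (hupdate : ∀ i, khat ≤ i → i ≤ k → p i = p (i - 1) + c • (A (z i) - b))
    (hpbd : ∀ i, khat - 1 ≤ i → i ≤ k → ‖p i‖ ≤ κ)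
    (hdescent : ∀ i, khat + 1 ≤ i → i ≤ k →
      (((1 - 2 * σ) / (2 * (1 - σ) ^ 2) * lam i * ‖w i‖ ^ 2 : ℝ) : EReal) ≤
        augL f h A b c (z (i - 1)) (p (i - 1)) - augL f h A b c (z i) (p i)
          + ((1 / c * ‖p i - p (i - 1)‖ ^ 2 : ℝ) : EReal))
    (Δ : EReal)
    (hΔ : Δ = (((∑ i ∈ Finset.Icc (khat + 1) k, lam i)⁻¹ : ℝ) : EReal) *
      (augL f h A b c (z khat) (p (khat - 1)) - augL f h A b c (z k) (p k)
        - ((‖p k‖ ^ 2 / (2 * c) : ℝ) : EReal))) :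
    (((∑ i ∈ Finset.Icc (khat + 1) k, lam i * ‖w i‖ ^ 2) /
        (∑ i ∈ Finset.Icc (khat + 1) k, lam i) : ℝ) : EReal) ≤
      (Cσ : EReal) * (Δ + ((9 * κ ^ 2 / (lamLB * c) : ℝ) : EReal)) := by
  have hfin : ∀ i, khat ≤ i → i ≤ k → ∀ q,
      augL f h A b c (z i) q = ((augL f h A b c (z i) q).toReal : EReal) := fun i hi hik q ↦
    (coe_toReal_augL f h A b c _ q (hzfin i hi hik).1 (hzfin i hi hik).2).symm
  have hstart := augL_multiplier_update f h A b c (z khat) hc.ne' (hupdate khat le_rfl hkhatk.le)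
  rw [hfin khat le_rfl hkhatk.le (p khat), hfin khat le_rfl hkhatk.le (p (khat - 1))] at hstart
  have hD : 0 < (1 - 2 * σ) / (2 * (1 - σ) ^ 2) := by
    have : 0 < 1 - σ := by linarith
    exact div_pos (by linarith) (by positivity)
  have key := sum_div_sum_le_of_descent (ℓ := fun i ↦ (augL f h A b c (z i) (p i)).toReal)
    (v := fun i ↦ ‖w i‖ ^ 2) hD hc hlamLB hkhatk
    (fun i hi ↦ hlam i (mem_Icc.1 hi).1 (mem_Icc.1 hi).2) hpbd (by exact_mod_cast hstart)
    fun i hi ↦ by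
      have hi := mem_Icc.1 hi
      have := hdescent i hi.1 hi.2
      rw [hfin i (by omega) hi.2, hfin (i - 1) (by omega) (by omega)] at this
      exact_mod_cast this
  rw [hΔ, hfin khat le_rfl hkhatk.le, hfin k hkhatk.le le_rfl, hCσ, ← inv_div (1 - 2 * σ)]
  exact_mod_cast key

/-- With `σ ∈ (0, 1/2)`, `C_σ := 2(1 − σ)²/(1 − 2σ)`, `λ̲ > 0`, `κ ≥ 0`,
integers `k̂ < k`, and sequences satisfying (i) the multiplier update, (ii) the
multiplier bound, and (iii) the per-iteration descent inequality, the quantity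
`Δ_k := (Σλ_i)⁻¹[L_c(z_k̂; p_{k̂−1}) − L_c(z_k; p_k) − ‖p_k‖²/(2c)]` satisfies
`(Σ λ_i ‖w_i‖²)/(Σ λ_i) ≤ C_σ (Δ_k + 9κ²/(λ̲ c))`. -/
theorem stmt7 {n l : ℕ} (f : EuclideanSpace ℝ (Fin n) → ℝ)
    (h : EuclideanSpace ℝ (Fin n) → EReal)
    (A : EuclideanSpace ℝ (Fin n) →ₗ[ℝ] EuclideanSpace ℝ (Fin l))
    (b : EuclideanSpace ℝ (Fin l)) (c : ℝ) (hc : 0 < c)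
    (σ : ℝ) (hσ1 : 0 < σ) (hσ2 : σ < 1 / 2)
    (Cσ : ℝ) (hCσ : Cσ = 2 * (1 - σ) ^ 2 / (1 - 2 * σ))
    (lamLB κ : ℝ) (hlamLB : 0 < lamLB) (hκ : 0 ≤ κ)
    (khat k : ℤ) (hkhatk : khat < k)
    (z : ℤ → EuclideanSpace ℝ (Fin n)) (p : ℤ → EuclideanSpace ℝ (Fin l))
    (lam : ℤ → ℝ) (w : ℤ → EuclideanSpace ℝ (Fin n))
    (hzfin : ∀ i, khat ≤ i → i ≤ k → h (z i) ≠ ⊤ ∧ h (z i) ≠ ⊥)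
    (hlam : ∀ i, khat + 1 ≤ i → i ≤ k → lamLB ≤ lam i)
    (hupdate : ∀ i, khat ≤ i → i ≤ k → p i = p (i - 1) + c • (A (z i) - b))
    (hpbd : ∀ i, khat - 1 ≤ i → i ≤ k → ‖p i‖ ≤ κ)
    (hdescent : ∀ i, khat + 1 ≤ i → i ≤ k →
      (((1 - 2 * σ) / (2 * (1 - σ) ^ 2) * lam i * ‖w i‖ ^ 2 : ℝ) : EReal) ≤
        augL f h A b c (z (i - 1)) (p (i - 1)) - augL f h A b c (z i) (p i)
          + ((1 / c * ‖p i - p (i - 1)‖ ^ 2 : ℝ) : EReal))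
    (Δ : EReal)
    (hΔ : Δ = (((∑ i ∈ Finset.Icc (khat + 1) k, lam i)⁻¹ : ℝ) : EReal) *
      (augL f h A b c (z khat) (p (khat - 1)) - augL f h A b c (z k) (p k)
        - ((‖p k‖ ^ 2 / (2 * c) : ℝ) : EReal))) :
    (((∑ i ∈ Finset.Icc (khat + 1) k, lam i * ‖w i‖ ^ 2) /
        (∑ i ∈ Finset.Icc (khat + 1) k, lam i) : ℝ) : EReal) ≤
      (Cσ : EReal) * (Δ + ((9 * κ ^ 2 / (lamLB * c) : ℝ) : EReal)) :=
  stmt7_general f h A b c hc σ hσ2 Cσ hCσ lamLB κ hlamLB khat k hkhatk z p lam w hzfin hlam hupdate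
    hpbd hdescent Δ hΔ
end

section
/- Let f : ℝⁿ → ℝ, h : ℝⁿ → ℝ ∪ {+∞} with domain H := {x : h(x) < +∞}, A : ℝⁿ → ℝˡ linear, and b ∈ ℝˡ. Suppose |f(z) + h(z)| ≤ S for all z ∈ H and φ_* ∈ ℝ satisfies φ_* ≤ f(z) + h(z) for all z ∈ H. Let c ≥ c₁ > 0 and κ ≥ 0, let integers k̂ < k, points z_{k̂}, z_k ∈ H, multipliers p_{k̂−1}, p_{k̂}, p_k ∈ ℝˡ with p_{k̂} = p_{k̂−1} + c(A z_{k̂} − b), ‖p_{k̂−1}‖ ≤ κ, ‖p_{k̂}‖ ≤ κ, ‖p_k‖ ≤ κ, and positive scalars λ_i for k̂ + 1 ≤ i ≤ k. Then Δ_k := (Σ_{i=k̂+1}^{k} λ_i)^{−1}[L_c(z_{k̂}; p_{k̂−1}) − L_c(z_k; p_k) − ‖p_k‖²/(2c)] satisfies Δ_k ≤ (S + 4κ²/c₁ − φ_*)/(Σ_{i=k̂+1}^{k} λ_i). -/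
open scoped RealInnerProductSpace

/-- Suppose `|f(z) + h(z)| ≤ S` on `H := {x | h x < ⊤}` and
`φ_* ≤ f(z) + h(z)` on `H`.  With `c ≥ c₁ > 0`, `κ ≥ 0`, integers `k̂ < k`, points
`z_k̂, z_k ∈ H`, multipliers with `p_k̂ = p_{k̂−1} + c(A z_k̂ − b)` all bounded by `κ`,
and positive `λ_i`, the quantity
`Δ_k := (Σλ_i)⁻¹[L_c(z_k̂; p_{k̂−1}) − L_c(z_k; p_k) − ‖p_k‖²/(2c)]` satisfies
`Δ_k ≤ (S + 4κ²/c₁ − φ_*)/(Σ λ_i)`. -/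
theorem stmt9 {n l : ℕ} (f : EuclideanSpace ℝ (Fin n) → ℝ)
    (h : EuclideanSpace ℝ (Fin n) → EReal)
    (hbot : ∀ x, h x ≠ ⊥)
    (H : Set (EuclideanSpace ℝ (Fin n))) (hH : H = {x | h x < ⊤})
    (A : EuclideanSpace ℝ (Fin n) →ₗ[ℝ] EuclideanSpace ℝ (Fin l))
    (b : EuclideanSpace ℝ (Fin l))
    (S phistar : ℝ)
    (hS : ∀ z ∈ H, ((-S : ℝ) : EReal) ≤ (f z : EReal) + h z ∧
      (f z : EReal) + h z ≤ ((S : ℝ) : EReal))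
    (hphistar : ∀ z ∈ H, ((phistar : ℝ) : EReal) ≤ (f z : EReal) + h z)
    (c c₁ κ : ℝ) (hcc₁ : c₁ ≤ c) (hc₁ : 0 < c₁) (hκ : 0 ≤ κ)
    (khat k : ℤ) (hkhatk : khat < k)
    (zkhat zk : EuclideanSpace ℝ (Fin n)) (hzkhat : zkhat ∈ H) (hzk : zk ∈ H)
    (pkhatm pkhat pk : EuclideanSpace ℝ (Fin l))
    (hpkhat : pkhat = pkhatm + c • (A zkhat - b))
    (hb1 : ‖pkhatm‖ ≤ κ) (hb2 : ‖pkhat‖ ≤ κ) (hb3 : ‖pk‖ ≤ κ)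
    (lam : ℤ → ℝ) (hlam : ∀ i, khat + 1 ≤ i → i ≤ k → 0 < lam i)
    (Δ : EReal)
    (hΔ : Δ = (((∑ i ∈ Finset.Icc (khat + 1) k, lam i)⁻¹ : ℝ) : EReal) *
      (augL f h A b c zkhat pkhatm - augL f h A b c zk pk
        - ((‖pk‖ ^ 2 / (2 * c) : ℝ) : EReal))) :
    Δ ≤ (((S + 4 * κ ^ 2 / c₁ - phistar) /
      (∑ i ∈ Finset.Icc (khat + 1) k, lam i) : ℝ) : EReal) := by

  have hc : (0:ℝ) < c := lt_of_lt_of_le hc₁ hcc₁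
  -- finite values of h on H
  have h1t : h zkhat ≠ ⊤ := by rw [hH] at hzkhat; exact ne_of_lt hzkhat
  have h2t : h zk ≠ ⊤ := by rw [hH] at hzk; exact ne_of_lt hzk
  set r1 := (h zkhat).toReal with hr1d
  set r2 := (h zk).toReal with hr2d
  have hr1 : h zkhat = (r1 : EReal) := (EReal.coe_toReal h1t (hbot zkhat)).symm
  have hr2 : h zk = (r2 : EReal) := (EReal.coe_toReal h2t (hbot zk)).symm
  -- positivity of the sum
  have hsum : (0:ℝ) < ∑ i ∈ Finset.Icc (khat + 1) k, lam i := by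
    apply Finset.sum_pos
    · intro i hi
      rw [Finset.mem_Icc] at hi
      exact hlam i hi.1 hi.2
    · exact Finset.nonempty_Icc.mpr (by omega)
  set sl := ∑ i ∈ Finset.Icc (khat + 1) k, lam i
  -- the first augmented Lagrangian term bound
  set v := A zkhat - b with hv
  set w := A zk - b with hw
  have key1 : ⟪pkhatm, v⟫ + c / 2 * ‖v‖ ^ 2 = (‖pkhat‖ ^ 2 - ‖pkhatm‖ ^ 2) / (2 * c) := by
    have hnorm : ‖pkhat‖ ^ 2 = ‖pkhatm‖ ^ 2 + 2 * (c * ⟪pkhatm, v⟫) + c ^ 2 * ‖v‖ ^ 2 := by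
      rw [hpkhat, ← real_inner_self_eq_norm_sq]
      rw [real_inner_add_add_self, real_inner_smul_right, real_inner_smul_left,
        real_inner_smul_right, real_inner_self_eq_norm_sq, real_inner_self_eq_norm_sq]
      ring
    set t := (⟪pkhatm, v⟫ : ℝ)
    rw [eq_div_iff (by positivity : (2*c) ≠ 0)]
    nlinarith [hnorm]
  have key2 : -(‖pk‖ ^ 2 / (2 * c)) ≤ ⟪pk, w⟫ + c / 2 * ‖w‖ ^ 2 := by
    have hcs : |⟪pk, w⟫| ≤ ‖pk‖ * ‖w‖ := abs_real_inner_le_norm pk w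
    have h1 : -(‖pk‖ * ‖w‖) ≤ ⟪pk, w⟫ := neg_le_of_abs_le hcs
    set t := (⟪pk, w⟫ : ℝ)
    have hnn : 0 ≤ 2 * c * t + c ^ 2 * ‖w‖ ^ 2 + ‖pk‖ ^ 2 := by
      nlinarith [sq_nonneg (c * ‖w‖ - ‖pk‖), mul_le_mul_of_nonneg_left h1 (by linarith : (0:ℝ) ≤ 2 * c)]
    have e : t + c / 2 * ‖w‖ ^ 2 + ‖pk‖ ^ 2 / (2 * c)
        = (2 * c * t + c ^ 2 * ‖w‖ ^ 2 + ‖pk‖ ^ 2) / (2 * c) := by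
      field_simp
    have := div_nonneg hnn (by positivity : (0:ℝ) ≤ 2 * c)
    linarith [e ▸ this]
  -- bounds on f+h
  have hS1 : f zkhat + r1 ≤ S := by
    have := (hS zkhat hzkhat).2
    rw [hr1] at this
    exact_mod_cast this
  have hP2 : phistar ≤ f zk + r2 := by
    have := hphistar zk hzk
    rw [hr2] at this
    exact_mod_cast this
  -- real-valued combined bound
  have hreal : (f zkhat + r1 + (⟪pkhatm, v⟫ + c / 2 * ‖v‖ ^ 2))
      - (f zk + r2 + (⟪pk, w⟫ + c / 2 * ‖w‖ ^ 2)) - ‖pk‖ ^ 2 / (2 * c)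
      ≤ S + 4 * κ ^ 2 / c₁ - phistar := by
    rw [key1]
    have h1 : ‖pkhat‖ ^ 2 ≤ κ ^ 2 := by nlinarith [norm_nonneg pkhat]
    have h2 : (0:ℝ) ≤ ‖pkhatm‖ ^ 2 := sq_nonneg _
    have hq : (‖pkhat‖ ^ 2 - ‖pkhatm‖ ^ 2) / (2 * c) ≤ 4 * κ ^ 2 / c₁ := by
      calc (‖pkhat‖ ^ 2 - ‖pkhatm‖ ^ 2) / (2 * c) ≤ κ ^ 2 / (2 * c₁) :=
            div_le_div₀ (by positivity) (by linarith) (by positivity) (by linarith)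
        _ ≤ 4 * κ ^ 2 / c₁ := by
            rw [div_le_div_iff₀ (by positivity) hc₁]; nlinarith [sq_nonneg κ]
    linarith [key2]
  -- conclude
  rw [hΔ]
  simp only [augL, hr1, hr2, ← hv, ← hw]
  norm_cast
  have h2 := mul_le_mul_of_nonneg_left hreal (inv_nonneg.mpr hsum.le)
  exact le_trans (le_of_eq (by ring)) (h2.trans_eq (inv_mul_eq_div _ _))
end

section
/- Let μ > 0 and L_max > μ, and set Q := 2√(L_max/μ). Let {L_j}_{j≥0} be a nondecreasing sequence with μ < L_j ≤ L_max for all j. Define sequences {a_j}, {A_j}, {τ_j} by A_0 = 0, τ_0 = 1, and for j ≥ 0: a_j := (τ_j + √(τ_j² + 4τ_j A_j (L_{j+1} − μ)))/(2(L_{j+1} − μ)), A_{j+1} := A_j + a_j, τ_{j+1} := τ_j + a_j μ. Then for every j ≥ 1, A_j L_j ≥ max{ j²/4, (1 + 1/Q)^{2(j−1)} }. -/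
/-!
`a_j` is the positive root of `(L_{j+1} - μ) a² = τ_j (A_j + a)`, and `τ_j = 1 + μ A_j`.
With `c = L_{j+1} - μ`, the bound `τ_j ≥ 1` gives `(c a_j)² ≥ c A_{j+1}`, so `√(c A_j)` grows by
at least `1/2` per step; the bound `τ_j ≥ μ A_j` together with `c ≤ L_max` gives
`4 A_j A_{j+1} ≤ Q² (A_{j+1} - A_j)²`, which forces `√A_{j+1} ≥ (1 + 1/Q) √A_j`.
Both inductions start from `A_1 (L_1 - μ) = 1`, and `L_1 ≤ L_j` by monotonicity.
-/

theorem mul_sq_quadratic_root_eq {c t x : ℝ} (hc : 0 < c) (ht : 0 ≤ t) (hx : 0 ≤ x) :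
    c * ((t + √(t ^ 2 + 4 * t * x * c)) / (2 * c)) ^ 2
      = t * (x + (t + √(t ^ 2 + 4 * t * x * c)) / (2 * c)) := by
  have hs : √(t ^ 2 + 4 * t * x * c) ^ 2 = t ^ 2 + 4 * t * x * c :=
    Real.sq_sqrt (by positivity)
  generalize √(t ^ 2 + 4 * t * x * c) = s at hs ⊢
  field_simp
  linear_combination hs

theorem one_add_inv_mul_le {Q p q : ℝ} (hQ : 0 < Q) (hp : 0 ≤ p) (hpq : p ≤ q)
    (h : 2 * p * q ≤ Q * (q ^ 2 - p ^ 2)) : (1 + 1 / Q) * p ≤ q := by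
  rcases (hp.trans hpq).eq_or_lt with rfl | hq
  · simp [le_antisymm hpq hp]
  have h2q : 2 * q * p ≤ 2 * q * (Q * (q - p)) := by
    nlinarith [mul_le_mul_of_nonneg_left (by linarith : q + p ≤ 2 * q)
      (by nlinarith : 0 ≤ Q * (q - p))]
  have h3 : p / Q ≤ q - p := (div_le_iff₀' hQ).2 (le_of_mul_le_mul_left h2q (by positivity))
  calc (1 + 1 / Q) * p = p + p / Q := by ring
    _ ≤ q := by linarith

theorem one_add_inv_sq_mul_le {Q x y : ℝ} (hQ : 0 < Q) (hx : 0 ≤ x) (hxy : x ≤ y)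
    (h : 4 * x * y ≤ Q ^ 2 * (y - x) ^ 2) : (1 + 1 / Q) ^ 2 * x ≤ y := by
  obtain ⟨p, hp, rfl⟩ : ∃ p, 0 ≤ p ∧ x = p ^ 2 := ⟨√x, Real.sqrt_nonneg x, (Real.sq_sqrt hx).symm⟩
  obtain ⟨q, hq, rfl⟩ : ∃ q, 0 ≤ q ∧ y = q ^ 2 :=
    ⟨√y, Real.sqrt_nonneg y, (Real.sq_sqrt (hx.trans hxy)).symm⟩
  have hpq : p ≤ q := (pow_le_pow_iff_left₀ hp hq two_ne_zero).1 hxy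
  rw [← mul_pow]
  gcongr
  refine one_add_inv_mul_le hQ hp hpq ?_
  exact (pow_le_pow_iff_left₀ (by positivity) (by nlinarith) two_ne_zero).1 (by linarith)

theorem add_one_sq_div_four_le {n u v : ℝ} (hu : n ^ 2 / 4 ≤ u)
    (huv : u ≤ v) (hv : 0 < v) (h : v ≤ (v - u) ^ 2) : (n + 1) ^ 2 / 4 ≤ v := by
  set w := v - u
  have hw : 1 ≤ w := by nlinarith
  have hnw : n ≤ 2 * w - 1 := by nlinarith
  nlinarith

structure AccelStepSizes (μ : ℝ) (L a A τ : ℕ → ℝ) : Prop where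
  A_zero : A 0 = 0
  τ_zero : τ 0 = 1
  a_eq : ∀ j, a j = (τ j + √(τ j ^ 2 + 4 * τ j * A j * (L (j + 1) - μ))) / (2 * (L (j + 1) - μ))
  A_succ : ∀ j, A (j + 1) = A j + a j
  τ_succ : ∀ j, τ (j + 1) = τ j + a j * μ

namespace AccelStepSizes

variable {μ : ℝ} {L a A τ : ℕ → ℝ}

theorem τ_eq (h : AccelStepSizes μ L a A τ) (j : ℕ) : τ j = 1 + μ * A j := by
  induction j with
  | zero => simp [h.τ_zero, h.A_zero]
  | succ n ih => rw [h.τ_succ, h.A_succ, ih]; ring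

theorem A_nonneg (h : AccelStepSizes μ L a A τ) (hμ : 0 ≤ μ) (hL : ∀ j, μ < L j) (j : ℕ) :
    0 ≤ A j := by
  induction j with
  | zero => exact h.A_zero.ge
  | succ n ih =>
    have ha : 0 ≤ a n := by
      rw [h.a_eq, h.τ_eq]
      exact div_nonneg (by positivity) (by linarith [hL (n + 1)])
    rw [h.A_succ]
    exact add_nonneg ih ha

theorem a_pos (h : AccelStepSizes μ L a A τ) (hμ : 0 ≤ μ) (hL : ∀ j, μ < L j) (j : ℕ) :
    0 < a j := by
  have := h.A_nonneg hμ hL j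
  rw [h.a_eq, h.τ_eq]
  exact div_pos (by positivity) (by linarith [hL (j + 1)])

theorem A_pos (h : AccelStepSizes μ L a A τ) (hμ : 0 ≤ μ) (hL : ∀ j, μ < L j) (j : ℕ) :
    0 < A (j + 1) := by
  rw [h.A_succ]
  exact add_pos_of_nonneg_of_pos (h.A_nonneg hμ hL j) (h.a_pos hμ hL j)

theorem sub_mul_a_sq_eq (h : AccelStepSizes μ L a A τ) (hμ : 0 ≤ μ) (hL : ∀ j, μ < L j) (j : ℕ) :
    (L (j + 1) - μ) * a j ^ 2 = τ j * A (j + 1) := by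
  have hτ : 0 ≤ τ j := by rw [h.τ_eq]; have := h.A_nonneg hμ hL j; positivity
  rw [h.A_succ, h.a_eq j]
  exact mul_sq_quadratic_root_eq (sub_pos.2 (hL _)) hτ (h.A_nonneg hμ hL j)

theorem A_one_mul (h : AccelStepSizes μ L a A τ) (hμ : 0 ≤ μ) (hL : ∀ j, μ < L j) :
    A 1 * (L 1 - μ) = 1 := by
  have key := h.sub_mul_a_sq_eq hμ hL 0
  simp only [h.τ_zero, one_mul, h.A_succ, h.A_zero, zero_add] at key ⊢
  have ha := (h.a_pos hμ hL 0).ne'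
  calc a 0 * (L 1 - μ) = (L 1 - μ) * a 0 ^ 2 / a 0 := by field_simp
    _ = 1 := by rw [key, div_self ha]

theorem sq_div_four_le_A_mul (h : AccelStepSizes μ L a A τ) (hμ : 0 ≤ μ) (hL : ∀ j, μ < L j)
    (hmono : Monotone L) {j : ℕ} (hj : 1 ≤ j) : (j : ℝ) ^ 2 / 4 ≤ A j * (L j - μ) := by
  induction j, hj using Nat.le_induction with
  | base => rw [h.A_one_mul hμ hL]; norm_num
  | succ n hn ih =>
    have hc : 0 < L (n + 1) - μ := sub_pos.2 (hL _)
    have hA := h.A_nonneg hμ hL n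
    push_cast
    refine add_one_sq_div_four_le (u := A n * (L (n + 1) - μ)) ?_ ?_
      (mul_pos (h.A_pos hμ hL n) hc) ?_
    · exact ih.trans (by gcongr; exact hmono n.le_succ)
    · rw [h.A_succ]; gcongr; linarith [h.a_pos hμ hL n]
    · have hτ : 1 ≤ τ n := by rw [h.τ_eq]; nlinarith
      calc A (n + 1) * (L (n + 1) - μ) ≤ τ n * A (n + 1) * (L (n + 1) - μ) := by
            gcongr
            exact le_mul_of_one_le_left (h.A_pos hμ hL n).le hτ
        _ = (A (n + 1) * (L (n + 1) - μ) - A n * (L (n + 1) - μ)) ^ 2 := by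
            rw [← h.sub_mul_a_sq_eq hμ hL, h.A_succ]; ring

theorem one_add_inv_sq_mul_A_le {Lmax Q : ℝ} (h : AccelStepSizes μ L a A τ) (hμ : 0 < μ)
    (hL : ∀ j, μ < L j ∧ L j ≤ Lmax) (hQ : Q = 2 * √(Lmax / μ)) (j : ℕ) :
    (1 + 1 / Q) ^ 2 * A j ≤ A (j + 1) := by
  have hL' : ∀ j, μ < L j := fun j => (hL j).1
  have hLmax : 0 < Lmax := by linarith [hL 0]
  have hQpos : 0 < Q := by rw [hQ]; positivity
  have hQsq : Q ^ 2 = 4 * (Lmax / μ) := by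
    rw [hQ, mul_pow, Real.sq_sqrt (by positivity)]; norm_num
  refine one_add_inv_sq_mul_le hQpos (h.A_nonneg hμ.le hL' j) (by rw [h.A_succ]; linarith [h.a_pos hμ.le hL' j]) ?_
  have hkey : μ * (A j * A (j + 1)) ≤ Lmax * a j ^ 2 :=
    calc μ * (A j * A (j + 1)) ≤ τ j * A (j + 1) := by
          rw [h.τ_eq]; nlinarith [h.A_nonneg hμ.le hL' j, h.A_nonneg hμ.le hL' (j + 1)]
      _ = (L (j + 1) - μ) * a j ^ 2 := (h.sub_mul_a_sq_eq hμ.le hL' j).symm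
      _ ≤ Lmax * a j ^ 2 := by gcongr; linarith [hL (j + 1)]
  rw [hQsq, show A (j + 1) - A j = a j by rw [h.A_succ]; ring]
  rw [← le_div_iff₀' hμ, mul_div_right_comm] at hkey
  linarith

theorem one_add_inv_pow_le_A_mul {Lmax Q : ℝ} (h : AccelStepSizes μ L a A τ) (hμ : 0 < μ)
    (hL : ∀ j, μ < L j ∧ L j ≤ Lmax) (hQ : Q = 2 * √(Lmax / μ)) {j : ℕ} (hj : 1 ≤ j) :
    (1 + 1 / Q) ^ (2 * (j - 1)) ≤ A j * (L 1 - μ) := by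
  obtain ⟨n, rfl⟩ := Nat.exists_eq_add_of_le' hj
  have hgeom := geom_le (u := fun k => A (k + 1) * (L 1 - μ)) (sq_nonneg (1 + 1 / Q)) n
    fun k _ => by
      rw [← mul_assoc]
      exact mul_le_mul_of_nonneg_right (h.one_add_inv_sq_mul_A_le hμ hL hQ (k + 1))
        (sub_pos.2 (hL 1).1).le
  simpa [pow_mul, h.A_one_mul hμ.le fun j => (hL j).1] using hgeom

end AccelStepSizes

theorem stmt15_general (μ Lmax : ℝ) (hμ : 0 < μ)
    (Q : ℝ) (hQ : Q = 2 * Real.sqrt (Lmax / μ))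
    (L : ℕ → ℝ) (hmono : Monotone L) (hLb : ∀ j, μ < L j ∧ L j ≤ Lmax)
    (a A τ : ℕ → ℝ) (hA0 : A 0 = 0) (hτ0 : τ 0 = 1)
    (ha : ∀ j, a j =
      (τ j + Real.sqrt ((τ j) ^ 2 + 4 * τ j * A j * (L (j + 1) - μ))) /
        (2 * (L (j + 1) - μ)))
    (hA : ∀ j, A (j + 1) = A j + a j)
    (hτ : ∀ j, τ (j + 1) = τ j + a j * μ) :
    ∀ j : ℕ, 1 ≤ j →
      max ((j : ℝ) ^ 2 / 4) ((1 + 1 / Q) ^ (2 * (j - 1))) ≤ A j * L j := by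
  intro j hj
  have h : AccelStepSizes μ L a A τ := ⟨hA0, hτ0, ha, hA, hτ⟩
  have hL : ∀ j, μ < L j := fun j => (hLb j).1
  have hAL : A j * (L j - μ) ≤ A j * L j := by
    have := h.A_nonneg hμ.le hL j
    nlinarith
  refine max_le ((h.sq_div_four_le_A_mul hμ.le hL hmono hj).trans hAL) ?_
  calc (1 + 1 / Q) ^ (2 * (j - 1)) ≤ A j * (L 1 - μ) := h.one_add_inv_pow_le_A_mul hμ hLb hQ hj
    _ ≤ A j * (L j - μ) := by gcongr; exacts [h.A_nonneg hμ.le hL j, hmono hj]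
    _ ≤ A j * L j := hAL

/-- Let `μ > 0`, `L_max > μ`, `Q := 2√(L_max/μ)`, and let `{L_j}` be a
nondecreasing sequence with `μ < L_j ≤ L_max`.  Define `A_0 = 0`, `τ_0 = 1`,
`a_j := (τ_j + √(τ_j² + 4τ_j A_j (L_{j+1} − μ)))/(2(L_{j+1} − μ))`,
`A_{j+1} := A_j + a_j`, `τ_{j+1} := τ_j + a_j μ`.  Then for every `j ≥ 1`,
`A_j L_j ≥ max{ j²/4, (1 + 1/Q)^(2(j−1)) }`. -/
theorem stmt15 (μ Lmax : ℝ) (hμ : 0 < μ) (hLmax : μ < Lmax)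
    (Q : ℝ) (hQ : Q = 2 * Real.sqrt (Lmax / μ))
    (L : ℕ → ℝ) (hmono : Monotone L) (hLb : ∀ j, μ < L j ∧ L j ≤ Lmax)
    (a A τ : ℕ → ℝ) (hA0 : A 0 = 0) (hτ0 : τ 0 = 1)
    (ha : ∀ j, a j =
      (τ j + Real.sqrt ((τ j) ^ 2 + 4 * τ j * A j * (L (j + 1) - μ))) /
        (2 * (L (j + 1) - μ)))
    (hA : ∀ j, A (j + 1) = A j + a j)
    (hτ : ∀ j, τ (j + 1) = τ j + a j * μ) :
    ∀ j : ℕ, 1 ≤ j →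
      max ((j : ℝ) ^ 2 / 4) ((1 + 1 / Q) ^ (2 * (j - 1))) ≤ A j * L j :=
  stmt15_general μ Lmax hμ Q hQ L hmono hLb a A τ hA0 hτ0 ha hA hτ
end

section
/- Let ψ_n : ℝⁿ → ℝ ∪ {+∞} be proper convex and ψ_s : ℝⁿ → ℝ differentiable. Let μ > 0, L > μ, χ ∈ (0, 1), A ≥ 0, a > 0, and τ > 0 satisfy τ(A + a) = (L − μ)a², and set τ' := τ + aμ. Let y, x ∈ ℝⁿ with ψ_n(y) finite, set x̃ := (Ay + ax)/(A + a), let y' be a minimizer over ℝⁿ of u ↦ ℓ_{ψ_s}(u; x̃) + ψ_n(u) + (L/2)‖u − x̃‖², set s := (L − μ)(x̃ − y'), define γ(z) := ℓ_{ψ_s}(y'; x̃) + ψ_n(y') + ⟨s, z − y'⟩ + (μ/2)‖y' − x̃‖² + (μ/2)‖z − y'‖², and set x' := (μ a y' + τ x − a s)/τ'. Assume ℓ_{ψ_s}(y'; x̃) + ((1 − χ)L/2)‖y' − x̃‖² ≥ ψ_s(y'). Then for every z ∈ ℝⁿ with ψ_n(z) finite, A·γ(y) + a·γ(z) + (τ/2)‖x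 − z‖² − (τ'/2)‖x' − z‖² ≥ (A + a)[ψ_s(y') + ψ_n(y')] + (χ(A + a)L/2)‖y' − x̃‖². -/
open scoped RealInnerProductSpace

lemma stmt16_aux {n : ℕ} (μ L A a τ : ℝ) (hμ : 0 < μ) (hL : μ < L)
    (hA : 0 ≤ A) (ha : 0 < a) (hτ : 0 < τ)
    (hrel : τ * (A + a) = (L - μ) * a ^ 2)
    (d e v w : EuclideanSpace ℝ (Fin n))
    (hcon : A • e + a • (v - w) = (A + a) • d) :
    ((A + a) * (L - μ) * ‖d‖ ^ 2) * (τ * (τ + a * μ))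
        + τ * ‖(μ * a) • w + τ • v - (a * (L - μ)) • d‖ ^ 2
      ≤ (2 * A * (L - μ) * ⟪d, e⟫ - 2 * a * (L - μ) * ⟪d, w⟫
          + A * μ * ‖e‖ ^ 2 + a * μ * ‖w‖ ^ 2 + τ * ‖v‖ ^ 2) * (τ * (τ + a * μ)) := by
  have hconP : A * ⟪d, e⟫ + a * (⟪d, v⟫ - ⟪d, w⟫) = (A + a) * ⟪d, d⟫ := by
    have h := congrArg (fun u => (⟪d, u⟫ : ℝ)) hcon
    simp only [inner_add_right, inner_sub_right, real_inner_smul_right] at h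
    linear_combination h
  have key : (2 * A * (L - μ) * ⟪d, e⟫ - 2 * a * (L - μ) * ⟪d, w⟫
          + A * μ * ‖e‖ ^ 2 + a * μ * ‖w‖ ^ 2 + τ * ‖v‖ ^ 2) * (τ * (τ + a * μ))
        - (((A + a) * (L - μ) * ‖d‖ ^ 2) * (τ * (τ + a * μ))
          + τ * ‖(μ * a) • w + τ • v - (a * (L - μ)) • d‖ ^ 2)
      = (τ * (τ + a * μ)) * (A * μ * ‖e‖ ^ 2)
        + a * μ * ‖(a * (L - μ)) • d - τ • v + τ • w‖ ^ 2 := by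
    simp only [← real_inner_self_eq_norm_sq, inner_add_left, inner_add_right,
      inner_sub_left, inner_sub_right, real_inner_smul_left, real_inner_smul_right]
    linear_combination (2 * (L - μ) * τ * (τ + a * μ)) * hconP
      + ((L - μ) * (τ + a * μ) * ⟪d, d⟫) * hrel
      - (a * (L - μ) * τ * (τ + a * μ)) * real_inner_comm v d
  have hnn : 0 ≤ (τ * (τ + a * μ)) * (A * μ * ‖e‖ ^ 2)
      + a * μ * ‖(a * (L - μ)) • d - τ • v + τ • w‖ ^ 2 := by positivity
  linarith

/-- Key recursive inequality for one ADAP-FISTA step: with `ψ_n`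
proper convex (modeled as `EReal`-valued, never `⊥`), `ψ_s` differentiable, `μ > 0`,
`L > μ`, `χ ∈ (0,1)`, scalars `A ≥ 0`, `a > 0`, `τ > 0` with `τ(A + a) = (L − μ)a²`,
`τ' := τ + aμ`, `x̃ := (Ay + ax)/(A + a)`, `y'` a minimizer of
`u ↦ ℓ_{ψ_s}(u; x̃) + ψ_n(u) + (L/2)‖u − x̃‖²`, `s := (L − μ)(x̃ − y')`,
`γ` the associated lower model, `x' := (μay' + τx − as)/τ'`, and the descent
condition `ℓ_{ψ_s}(y'; x̃) + ((1 − χ)L/2)‖y' − x̃‖² ≥ ψ_s(y')`, we have for every `z`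
with `ψ_n(z)` finite:
`A·γ(y) + a·γ(z) + (τ/2)‖x − z‖² − (τ'/2)‖x' − z‖²
  ≥ (A + a)[ψ_s(y') + ψ_n(y')] + (χ(A + a)L/2)‖y' − x̃‖²`. -/
theorem stmt16 {n : ℕ} (ψn : EuclideanSpace ℝ (Fin n) → EReal)
    (hbot : ∀ x, ψn x ≠ ⊥) (hproper : ∃ x, ψn x ≠ ⊤)
    (hconv : ∀ x y : EuclideanSpace ℝ (Fin n), ∀ a b : ℝ, 0 ≤ a → 0 ≤ b → a + b = 1 →
      ψn (a • x + b • y) ≤ (a : EReal) * ψn x + (b : EReal) * ψn y)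
    (ψs : EuclideanSpace ℝ (Fin n) → ℝ) (hψs : Differentiable ℝ ψs)
    (μ L χ : ℝ) (hμ : 0 < μ) (hL : μ < L) (hχ1 : 0 < χ) (hχ2 : χ < 1)
    (A a τ : ℝ) (hA : 0 ≤ A) (ha : 0 < a) (hτ : 0 < τ)
    (hrel : τ * (A + a) = (L - μ) * a ^ 2)
    (τ' : ℝ) (hτ' : τ' = τ + a * μ)
    (y x : EuclideanSpace ℝ (Fin n)) (hy : ψn y ≠ ⊤)
    (xtilde : EuclideanSpace ℝ (Fin n)) (hxtilde : xtilde = (A + a)⁻¹ • (A • y + a • x))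
    (y' : EuclideanSpace ℝ (Fin n)) (hy'fin : ψn y' ≠ ⊤)
    (hy'min : ∀ u : EuclideanSpace ℝ (Fin n),
      ((ψs xtilde + ⟪gradient ψs xtilde, y' - xtilde⟫ + L / 2 * ‖y' - xtilde‖ ^ 2 : ℝ) :
          EReal) + ψn y' ≤
        ((ψs xtilde + ⟪gradient ψs xtilde, u - xtilde⟫ + L / 2 * ‖u - xtilde‖ ^ 2 : ℝ) :
          EReal) + ψn u)
    (s : EuclideanSpace ℝ (Fin n)) (hs : s = (L - μ) • (xtilde - y'))
    (γ : EuclideanSpace ℝ (Fin n) → EReal)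
    (hγ : γ = fun z => ((ψs xtilde + ⟪gradient ψs xtilde, y' - xtilde⟫
        + ⟪s, z - y'⟫ + μ / 2 * ‖y' - xtilde‖ ^ 2 + μ / 2 * ‖z - y'‖ ^ 2 : ℝ) : EReal)
        + ψn y')
    (x' : EuclideanSpace ℝ (Fin n))
    (hx' : x' = τ'⁻¹ • ((μ * a) • y' + τ • x - a • s))
    (hdesc : ψs y' ≤ ψs xtilde + ⟪gradient ψs xtilde, y' - xtilde⟫
      + (1 - χ) * L / 2 * ‖y' - xtilde‖ ^ 2) :
    ∀ z : EuclideanSpace ℝ (Fin n), ψn z ≠ ⊤ →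
      ((A + a : ℝ) : EReal) * ((ψs y' : EReal) + ψn y')
          + ((χ * (A + a) * L / 2 * ‖y' - xtilde‖ ^ 2 : ℝ) : EReal) ≤
        (A : EReal) * γ y + (a : EReal) * γ z
          + ((τ / 2 * ‖x - z‖ ^ 2 : ℝ) : EReal)
          - ((τ' / 2 * ‖x' - z‖ ^ 2 : ℝ) : EReal) := by
  intro z hz
  have hAa : (0:ℝ) < A + a := by linarith
  have hτ'pos : 0 < τ' := by rw [hτ']; positivity
  have hxt : (A + a) • xtilde = A • y + a • x := by
    rw [hxtilde, smul_smul, mul_inv_cancel₀ hAa.ne', one_smul]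
  have hcon : A • (y - y') + a • ((x - z) - (y' - z)) = (A + a) • (xtilde - y') := by
    rw [smul_sub (A + a), hxt]; module
  have hx'mul : τ' • x' = (μ * a) • y' + τ • x - a • s := by
    rw [hx', smul_smul, mul_inv_cancel₀ hτ'pos.ne', one_smul]
  have hMz : τ' • (x' - z)
      = (μ * a) • (y' - z) + τ • (x - z) - (a * (L - μ)) • (xtilde - y') := by
    rw [smul_sub, hx'mul, hs, hτ']; module
  have hM2 : ‖(μ * a) • (y' - z) + τ • (x - z) - (a * (L - μ)) • (xtilde - y')‖ ^ 2
      = τ' ^ 2 * ‖x' - z‖ ^ 2 := by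
    rw [← hMz, norm_smul, Real.norm_eq_abs, abs_of_pos hτ'pos, mul_pow]
  have haux := stmt16_aux μ L A a τ hμ hL hA ha hτ hrel
    (xtilde - y') (y - y') (x - z) (y' - z) hcon
  rw [hM2, ← hτ'] at haux
  have hdiv : τ' * ‖x' - z‖ ^ 2 + (A + a) * (L - μ) * ‖xtilde - y'‖ ^ 2
      ≤ 2 * A * (L - μ) * ⟪xtilde - y', y - y'⟫ - 2 * a * (L - μ) * ⟪xtilde - y', y' - z⟫
        + A * μ * ‖y - y'‖ ^ 2 + a * μ * ‖y' - z‖ ^ 2 + τ * ‖x - z‖ ^ 2 := by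
    have hpos : (0:ℝ) < τ * τ' := by positivity
    refine le_of_mul_le_mul_left ?_ hpos
    linarith [haux]
  have hsy : ⟪s, y - y'⟫ = (L - μ) * ⟪xtilde - y', y - y'⟫ := by
    rw [hs, real_inner_smul_left]
  have hsz : ⟪s, z - y'⟫ = -((L - μ) * ⟪xtilde - y', y' - z⟫) := by
    rw [hs, real_inner_smul_left, ← neg_sub y' z, inner_neg_right]; ring
  have hdesc2 : (A + a) * ψs y' ≤ (A + a) * (ψs xtilde
      + ⟪gradient ψs xtilde, y' - xtilde⟫ + (1 - χ) * L / 2 * ‖xtilde - y'‖ ^ 2) := by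
    rw [← norm_sub_rev y' xtilde]
    exact mul_le_mul_of_nonneg_left hdesc hAa.le
  have hp : ((ψn y').toReal : EReal) = ψn y' := EReal.coe_toReal hy'fin (hbot y')
  simp only [hγ]
  rw [← hp]
  norm_cast
  rw [norm_sub_rev y' xtilde, norm_sub_rev z y', hsy, hsz]
  linarith [hdiv, hdesc2]
end

section
/- Let ψ_n : ℝⁿ → ℝ ∪ {+∞} be proper convex and let ψ_s : ℝⁿ → ℝ be differentiable and μ-strongly convex with μ > 0 (i.e., ψ_s − (μ/2)‖·‖² is convex). Let L > μ, x̃ ∈ ℝⁿ, and let y' be a minimizer over ℝⁿ of u ↦ ℓ_{ψ_s}(u; x̃) + ψ_n(u) + (L/2)‖u − x̃‖². Set s := (L − μ)(x̃ − y') and define γ(z) := ℓ_{ψ_s}(y'; x̃) + ψ_n(y') + ⟨s, z − y'⟩ + (μ/2)‖y' − x̃‖² + (μ/2)‖z − y'‖². Then γ(z) ≤ ψ_s(z) + ψ_n(z) for every z ∈ ℝⁿ. -/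
/-!
Two first-order inequalities add up to the claim. Strong convexity of `ψ_s` bounds it below by its
linearization at `x̃` plus `(μ/2)‖z − x̃‖²`. Optimality of `y'` for the convex model
`ψ_n + (smooth model)` gives, by comparing `y'` with the points of the segment `[y', z]` and letting
them tend to `y'`, the subgradient inequality `ψ_n(z) ≥ ψ_n(y') − ⟨∇ψ_s(x̃) + L(y' − x̃), z − y'⟩`.
Expanding `‖z − x̃‖²` around `y'` turns the sum of the two into `γ(z) ≤ ψ_s(z) + ψ_n(z)`.
-/

open scoped RealInnerProductSpace
open Set Filter

section Normed
variable {E : Type*} [NormedAddCommGroup E] [NormedSpace ℝ E]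

theorem ConvexOn.add_fderiv_le {f : E → ℝ} {f' : E →L[ℝ] ℝ} {x : E}
    (hf : ConvexOn ℝ univ f) (hd : HasFDerivAt f f' x) (z : E) :
    f x + f' (z - x) ≤ f z := by
  have hline : ConvexOn ℝ univ (f ∘ (AffineMap.lineMap x z : ℝ → E)) := hf.comp_affineMap _
  have hder : HasDerivAt (f ∘ (AffineMap.lineMap x z : ℝ → E)) (f' (z - x)) 0 :=
    hd.comp_hasDerivAt_of_eq _ AffineMap.hasDerivAt_lineMap (by simp)
  have := hline.le_slope_of_hasDerivAt (mem_univ 0) (mem_univ 1) zero_lt_one hder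
  simp only [slope_def_field, Function.comp_apply, AffineMap.lineMap_apply_one,
    AffineMap.lineMap_apply_zero, sub_zero, div_one] at this
  linarith

theorem le_add_fderiv_of_forall_add_le {φ : E → EReal} (hbot : ∀ x, φ x ≠ ⊥)
    (hconv : ∀ x y : E, ∀ a b : ℝ, 0 ≤ a → 0 ≤ b → a + b = 1 →
      φ (a • x + b • y) ≤ (a : EReal) * φ x + (b : EReal) * φ y)
    {q : E → ℝ} {q' : E →L[ℝ] ℝ} {y : E} (hq : HasFDerivAt q q' y) (hy : φ y ≠ ⊤)
    (hmin : ∀ u, (q y : EReal) + φ y ≤ q u + φ u) (z : E) :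
    φ y ≤ φ z + q' (z - y) := by
  rcases eq_or_ne (φ z) ⊤ with hz | hz
  · rw [hz, EReal.top_add_of_ne_bot (EReal.coe_ne_bot _)]
    exact le_top
  obtain ⟨a, ha⟩ : ∃ a : ℝ, φ y = a := ⟨_, (EReal.coe_toReal hy (hbot y)).symm⟩
  obtain ⟨b, hb⟩ : ∃ b : ℝ, φ z = b := ⟨_, (EReal.coe_toReal hz (hbot z)).symm⟩
  set g := q ∘ (AffineMap.lineMap y z : ℝ → E)
  have hder : HasDerivAt g (q' (z - y)) 0 :=
    hq.comp_hasDerivAt_of_eq _ AffineMap.hasDerivAt_lineMap (by simp)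
  -- on the segment, convexity of `φ` and minimality of `y` give `q (y + t (z - y)) - q y ≥ t (a - b)`
  have hslope : ∀ t ∈ Ioo (0 : ℝ) 1, a - b ≤ slope g 0 t := by
    rintro t ⟨ht0, ht1⟩
    have hcv : φ (AffineMap.lineMap y z t) ≤ ((1 - t) * a + t * b : ℝ) := by
      rw [AffineMap.lineMap_apply_module]
      have := hconv y z (1 - t) t (by linarith) ht0.le (by ring)
      rw [ha, hb] at this
      exact_mod_cast this
    have hle : ((q y + a : ℝ) : EReal) ≤ ((g t + ((1 - t) * a + t * b)) : ℝ) :=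
      calc ((q y + a : ℝ) : EReal) = (q y : EReal) + φ y := by rw [ha, EReal.coe_add]
        _ ≤ q (AffineMap.lineMap y z t) + φ (AffineMap.lineMap y z t) := hmin _
        _ ≤ _ := add_le_add_right hcv _
        _ = _ := (EReal.coe_add _ _).symm
    have hle' := EReal.coe_le_coe_iff.mp hle
    have hg0 : g 0 = q y := by simp [g]
    rw [slope_def_field, hg0, sub_zero, le_div_iff₀ ht0]
    linarith
  have hlim :=
    (hasDerivWithinAt_iff_tendsto_slope' (self_notMem_Ioi (a := (0 : ℝ)))).mp hder.hasDerivWithinAt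
  have hab : a - b ≤ q' (z - y) :=
    ge_of_tendsto hlim (eventually_of_mem (Ioo_mem_nhdsGT one_pos) hslope)
  rw [ha, hb]
  exact_mod_cast (by linarith : a ≤ b + q' (z - y))

end Normed

section Inner
variable {E : Type*} [NormedAddCommGroup E] [InnerProductSpace ℝ E]

theorem StrongConvexOn.add_fderiv_add_sq_le {f : E → ℝ} {f' : E →L[ℝ] ℝ} {x : E} {m : ℝ}
    (hf : StrongConvexOn univ m f) (hd : HasFDerivAt f f' x) (z : E) :
    f x + f' (z - x) + m / 2 * ‖z - x‖ ^ 2 ≤ f z := by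
  have hsq := ((hasStrictFDerivAt_norm_sq x).hasFDerivAt).const_mul (m / 2)
  have := (strongConvexOn_iff_convex.mp hf).add_fderiv_le (hd.sub hsq) z
  have hnorm : ‖z‖ ^ 2 = ‖x‖ ^ 2 + 2 * ⟪x, z - x⟫ + ‖z - x‖ ^ 2 := by
    rw [← norm_add_sq_real, add_sub_cancel]
  simp only [sub_apply, smul_apply, coe_innerSL_apply,
    nsmul_eq_mul, Nat.cast_ofNat, smul_eq_mul, hnorm] at this
  linarith [f'.map_sub z x]

end Inner

theorem stmt18_general {n : ℕ} (ψn : EuclideanSpace ℝ (Fin n) → EReal)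
    (hbot : ∀ x, ψn x ≠ ⊥)
    (hconv : ∀ x y : EuclideanSpace ℝ (Fin n), ∀ a b : ℝ, 0 ≤ a → 0 ≤ b → a + b = 1 →
      ψn (a • x + b • y) ≤ (a : EReal) * ψn x + (b : EReal) * ψn y)
    (ψs : EuclideanSpace ℝ (Fin n) → ℝ) (hψs : Differentiable ℝ ψs)
    (μ : ℝ)
    (hsc : ConvexOn ℝ Set.univ (fun z : EuclideanSpace ℝ (Fin n) =>
      ψs z - μ / 2 * ‖z‖ ^ 2))
    (L : ℝ)
    (xtilde : EuclideanSpace ℝ (Fin n))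
    (y' : EuclideanSpace ℝ (Fin n)) (hy'fin : ψn y' ≠ ⊤)
    (hy'min : ∀ u : EuclideanSpace ℝ (Fin n),
      ((ψs xtilde + ⟪gradient ψs xtilde, y' - xtilde⟫ + L / 2 * ‖y' - xtilde‖ ^ 2 : ℝ) :
          EReal) + ψn y' ≤
        ((ψs xtilde + ⟪gradient ψs xtilde, u - xtilde⟫ + L / 2 * ‖u - xtilde‖ ^ 2 : ℝ) :
          EReal) + ψn u)
    (s : EuclideanSpace ℝ (Fin n)) (hs : s = (L - μ) • (xtilde - y'))
    (γ : EuclideanSpace ℝ (Fin n) → EReal)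
    (hγ : γ = fun z => ((ψs xtilde + ⟪gradient ψs xtilde, y' - xtilde⟫
        + ⟪s, z - y'⟫ + μ / 2 * ‖y' - xtilde‖ ^ 2 + μ / 2 * ‖z - y'‖ ^ 2 : ℝ) : EReal)
        + ψn y') :
    ∀ z : EuclideanSpace ℝ (Fin n), γ z ≤ (ψs z : EReal) + ψn z := by
  intro z
  subst hs hγ
  beta_reduce
  set g := gradient ψs xtilde
  have hsub := (hasFDerivAt_id (𝕜 := ℝ) y').sub_const xtilde
  have hmodel := ((hasFDerivAt_const (ψs xtilde) y').add
    ((innerSL ℝ g).hasFDerivAt.comp y' hsub)).add (hsub.norm_sq.const_mul (L / 2))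
  have hnonsmooth : ψn y' ≤ ψn z + ↑(⟪g, z - y'⟫ + L * ⟪y' - xtilde, z - y'⟫) := by
    convert le_add_fderiv_of_forall_add_le hbot hconv hmodel hy'fin hy'min z using 3
    simp [inner_sub_left]
    ring
  have hsmooth := (strongConvexOn_iff_convex.mpr hsc).add_fderiv_add_sq_le
    (hψs xtilde).hasGradientAt.hasFDerivAt z
  have hreal : ψs xtilde + ⟪g, y' - xtilde⟫ + ⟪(L - μ) • (xtilde - y'), z - y'⟫
      + μ / 2 * ‖y' - xtilde‖ ^ 2 + μ / 2 * ‖z - y'‖ ^ 2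
      + (⟪g, z - y'⟫ + L * ⟪y' - xtilde, z - y'⟫) ≤ ψs z := by
    have hsplit : z - xtilde = (y' - xtilde) + (z - y') := by abel
    simp only [InnerProductSpace.toDual_apply_apply] at hsmooth
    rw [hsplit, inner_add_right, norm_add_sq_real] at hsmooth
    rw [real_inner_smul_left, ← neg_sub y' xtilde, inner_neg_left]
    linarith
  calc _ ≤ _ + (ψn z + _) := add_le_add_right hnonsmooth _
    _ = _ := by rw [← add_assoc, add_right_comm, ← EReal.coe_add]
    _ ≤ _ := add_le_add_left (EReal.coe_le_coe_iff.mpr hreal) _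

/-- Let `ψ_n` be proper convex (modeled as `EReal`-valued, never `⊥`)
and let `ψ_s` be differentiable and `μ`-strongly convex (`ψ_s − (μ/2)‖·‖²` convex),
`μ > 0`.  Let `L > μ`, `x̃ ∈ ℝⁿ`, let `y'` minimize
`u ↦ ℓ_{ψ_s}(u; x̃) + ψ_n(u) + (L/2)‖u − x̃‖²`, set `s := (L − μ)(x̃ − y')` and define
`γ(z) := ℓ_{ψ_s}(y'; x̃) + ψ_n(y') + ⟨s, z − y'⟩ + (μ/2)‖y' − x̃‖² + (μ/2)‖z − y'‖²`.
Then `γ(z) ≤ ψ_s(z) + ψ_n(z)` for every `z`. -/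
theorem stmt18 {n : ℕ} (ψn : EuclideanSpace ℝ (Fin n) → EReal)
    (hbot : ∀ x, ψn x ≠ ⊥) (hproper : ∃ x, ψn x ≠ ⊤)
    (hconv : ∀ x y : EuclideanSpace ℝ (Fin n), ∀ a b : ℝ, 0 ≤ a → 0 ≤ b → a + b = 1 →
      ψn (a • x + b • y) ≤ (a : EReal) * ψn x + (b : EReal) * ψn y)
    (ψs : EuclideanSpace ℝ (Fin n) → ℝ) (hψs : Differentiable ℝ ψs)
    (μ : ℝ) (hμ : 0 < μ)
    (hsc : ConvexOn ℝ Set.univ (fun z : EuclideanSpace ℝ (Fin n) =>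
      ψs z - μ / 2 * ‖z‖ ^ 2))
    (L : ℝ) (hL : μ < L)
    (xtilde : EuclideanSpace ℝ (Fin n))
    (y' : EuclideanSpace ℝ (Fin n)) (hy'fin : ψn y' ≠ ⊤)
    (hy'min : ∀ u : EuclideanSpace ℝ (Fin n),
      ((ψs xtilde + ⟪gradient ψs xtilde, y' - xtilde⟫ + L / 2 * ‖y' - xtilde‖ ^ 2 : ℝ) :
          EReal) + ψn y' ≤
        ((ψs xtilde + ⟪gradient ψs xtilde, u - xtilde⟫ + L / 2 * ‖u - xtilde‖ ^ 2 : ℝ) :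
          EReal) + ψn u)
    (s : EuclideanSpace ℝ (Fin n)) (hs : s = (L - μ) • (xtilde - y'))
    (γ : EuclideanSpace ℝ (Fin n) → EReal)
    (hγ : γ = fun z => ((ψs xtilde + ⟪gradient ψs xtilde, y' - xtilde⟫
        + ⟪s, z - y'⟫ + μ / 2 * ‖y' - xtilde‖ ^ 2 + μ / 2 * ‖z - y'‖ ^ 2 : ℝ) : EReal)
        + ψn y') :
    ∀ z : EuclideanSpace ℝ (Fin n), γ z ≤ (ψs z : EReal) + ψn z :=
  stmt18_general ψn hbot hconv ψs hψs μ hsc L xtilde y' hy'fin hy'min s hs γ hγ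
end
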